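/- arXiv:2303.17437 — 6 statements merged into one kernel-verified Lean document; each statement's English description precedes it below -/
import Mathlib

section
/- Let (E,d) be a metric space and ν a Borel probability measure on E. For each n ≥ 1, let F_n be a random element of E^{V_n}, where V_n = {1,…,n}, defined on some probability space, and let o_n and o_n' be two independent uniformly distributed random elements of V_n, independent of F_n. Suppose that the pair (F_n(o_n), F_n(o_n')) converges in distribution to the product measure ν ⊗ ν on E × E. Then for every bounded continuous function h : E → ℝ, the real random variables (1/n) · Σ_{v ∈ V_n} h(F_n(v)) converge in probability (indeed in L²) to the constant ∫_E h dν. -/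
/-!
Put `S_n = (1/n) ∑_v h (F_n v)`. Because the roots are uniform and independent of `F_n`,
`E[h (F_n o_n)] = E[S_n]` and `E[h (F_n o_n) h (F_n o_n')] = E[S_n ^ 2]`. Testing the
assumed convergence in distribution against `h ∘ fst` and `(h ∘ fst) (h ∘ snd)` shows that
these moments tend to `c = ∫ h dν` and `c ^ 2`, so `E[(S_n - c) ^ 2] → 0`, and Chebyshev's
inequality concludes.
-/

open MeasureTheory ProbabilityTheory Filter Topology

lemma PMF.toMeasure_uniformOfFintype_prod {α β : Type*} [Fintype α] [Nonempty α] [Fintype β]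
    [Nonempty β] [MeasurableSpace α] [MeasurableSingletonClass α] [MeasurableSpace β]
    [MeasurableSingletonClass β] :
    (uniformOfFintype α).toMeasure.prod (uniformOfFintype β).toMeasure =
      (uniformOfFintype (α × β)).toMeasure := by
  refine Measure.ext_of_singleton fun ⟨a, b⟩ => ?_
  rw [← Set.singleton_prod_singleton, Measure.prod_prod, Set.singleton_prod_singleton]
  simp only [PMF.toMeasure_apply_singleton _ _ (measurableSet_singleton _),
    PMF.uniformOfFintype_apply, Fintype.card_prod, Nat.cast_mul]
  rw [ENNReal.mul_inv (by simp) (by simp)]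

lemma map_prodMk_eq_uniformOfFintype {Ω α β : Type*} [MeasurableSpace Ω] {P : Measure Ω}
    [Fintype α] [Nonempty α] [Fintype β] [Nonempty β] [MeasurableSpace α]
    [MeasurableSingletonClass α] [MeasurableSpace β] [MeasurableSingletonClass β]
    [IsFiniteMeasure P] {X : Ω → α} {Y : Ω → β} (hX : Measurable X) (hY : Measurable Y)
    (hXY : IndepFun X Y P)
    (hXunif : P.map X = (PMF.uniformOfFintype α).toMeasure)
    (hYunif : P.map Y = (PMF.uniformOfFintype β).toMeasure) :
    P.map (fun ω => (X ω, Y ω)) = (PMF.uniformOfFintype (α × β)).toMeasure := by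
  rw [(indepFun_iff_map_prod_eq_prod_map_map hX.aemeasurable hY.aemeasurable).mp hXY, hXunif,
    hYunif, PMF.toMeasure_uniformOfFintype_prod]

lemma measureReal_preimage_singleton_eq_inv_card {Ω ι : Type*}
    [MeasurableSpace Ω] {P : Measure Ω} [Fintype ι] [Nonempty ι] [MeasurableSpace ι]
    [MeasurableSingletonClass ι] {o : Ω → ι} (ho : Measurable o)
    (hunif : P.map o = (PMF.uniformOfFintype ι).toMeasure) (i : ι) :
    P.real (o ⁻¹' {i}) = (Fintype.card ι : ℝ)⁻¹ := by
  rw [← map_measureReal_apply ho (measurableSet_singleton i), hunif, measureReal_def,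
    PMF.toMeasure_apply_singleton _ _ (measurableSet_singleton i), PMF.uniformOfFintype_apply,
    ENNReal.toReal_inv, ENNReal.toReal_natCast]

theorem integral_apply_of_indepFun_uniform {Ω ι : Type*} [MeasurableSpace Ω] {P : Measure Ω}
    [Fintype ι] [Nonempty ι] [MeasurableSpace ι] [MeasurableSingletonClass ι]
    {Y : Ω → ι → ℝ} {o : Ω → ι} (hY : Measurable Y) (ho : Measurable o)
    (hunif : P.map o = (PMF.uniformOfFintype ι).toMeasure) (hind : IndepFun Y o P)
    (hint : ∀ i, Integrable (fun ω => Y ω i) P) :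
    ∫ ω, Y ω (o ω) ∂P = ∫ ω, (Fintype.card ι : ℝ)⁻¹ * ∑ i, Y ω i ∂P := by
  -- Split according to the value of `o`; each summand factors by independence.
  have hsplit : ∀ ω, Y ω (o ω) = ∑ i, ({i} : Set ι).indicator 1 (o ω) * Y ω i := by
    intro ω
    classical
    simp only [Set.indicator_apply, Set.mem_singleton_iff, Pi.one_apply, ite_mul, one_mul,
      zero_mul, Finset.sum_ite_eq, Finset.mem_univ, if_true]
  have hterm : ∀ i, ∫ ω, ({i} : Set ι).indicator 1 (o ω) * Y ω i ∂P
      = (Fintype.card ι : ℝ)⁻¹ * ∫ ω, Y ω i ∂P := by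
    intro i
    have hmul := hind.symm.integral_comp_mul_comp (f := ({i} : Set ι).indicator (1 : ι → ℝ))
      (g := fun y => y i) ho.aemeasurable hY.aemeasurable
      (measurable_of_finite _).aestronglyMeasurable
      (measurable_pi_apply i).aestronglyMeasurable
    have hmass : ∫ ω, ({i} : Set ι).indicator (1 : ι → ℝ) (o ω) ∂P
        = (Fintype.card ι : ℝ)⁻¹ := by
      have hpre : (fun ω => ({i} : Set ι).indicator (1 : ι → ℝ) (o ω))
          = (o ⁻¹' {i}).indicator 1 :=
        funext fun ω => (Set.indicator_comp_right o).symm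
      rw [hpre, integral_indicator_one (ho (measurableSet_singleton i)),
        measureReal_preimage_singleton_eq_inv_card ho hunif]
    simpa [hmass] using hmul
  have hintterm : ∀ i ∈ Finset.univ,
      Integrable (fun ω => ({i} : Set ι).indicator 1 (o ω) * Y ω i) P := fun i _ =>
    (hint i).bdd_mul (c := 1)
      ((measurable_of_finite (({i} : Set ι).indicator (1 : ι → ℝ))).comp
        ho).aestronglyMeasurable
      (ae_of_all _ fun ω => (norm_indicator_le_norm_self _ _).trans_eq norm_one)
  rw [integral_congr_ae (ae_of_all _ hsplit), integral_finsetSum _ hintterm, integral_const_mul,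
    integral_finsetSum _ fun i _ => hint i, Finset.mul_sum]
  exact Finset.sum_congr rfl fun i _ => hterm i

theorem integral_mul_apply_of_indepFun_uniform {Ω ι : Type*} [MeasurableSpace Ω]
    {P : Measure Ω} [IsFiniteMeasure P] [Fintype ι] [Nonempty ι] [MeasurableSpace ι]
    [MeasurableSingletonClass ι] {Y : Ω → ι → ℝ} {o o' : Ω → ι} (hY : Measurable Y)
    (ho : Measurable o) (ho' : Measurable o')
    (hunif : P.map o = (PMF.uniformOfFintype ι).toMeasure)
    (hunif' : P.map o' = (PMF.uniformOfFintype ι).toMeasure) (hoo' : IndepFun o o' P)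
    (hind : IndepFun Y (fun ω => (o ω, o' ω)) P) (hL2 : ∀ i, MemLp (fun ω => Y ω i) 2 P) :
    ∫ ω, Y ω (o ω) * Y ω (o' ω) ∂P
      = ∫ ω, ((Fintype.card ι : ℝ)⁻¹ * ∑ i, Y ω i) ^ 2 ∂P := by
  have hprod : Measurable fun (y : ι → ℝ) (p : ι × ι) => y p.1 * y p.2 :=
    measurable_pi_lambda _ fun p => (measurable_pi_apply p.1).mul (measurable_pi_apply p.2)
  refine (integral_apply_of_indepFun_uniform (hprod.comp hY) (ho.prodMk ho')
    (map_prodMk_eq_uniformOfFintype ho ho' hoo' hunif hunif') (hind.comp hprod measurable_id)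
    fun p => (hL2 p.1).integrable_mul (hL2 p.2)).trans
    (integral_congr_ae (ae_of_all _ fun ω => ?_))
  simp only [Function.comp_apply, Fintype.card_prod, Nat.cast_mul, Fintype.sum_prod_type,
    ← Finset.sum_mul_sum]
  ring

lemma integral_sub_const_sq {Ω : Type*} [MeasurableSpace Ω] {P : Measure Ω}
    [IsProbabilityMeasure P] {Y : Ω → ℝ} (hY : MemLp Y 2 P) (c : ℝ) :
    ∫ ω, (Y ω - c) ^ 2 ∂P = ∫ ω, Y ω ^ 2 ∂P - 2 * c * ∫ ω, Y ω ∂P + c ^ 2 := by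
  have hexp : ∀ ω, (Y ω - c) ^ 2 = Y ω ^ 2 - 2 * c * Y ω + c ^ 2 := fun ω => by ring
  have hint := hY.integrable one_le_two
  simp_rw [hexp]
  rw [integral_add (f := fun ω => Y ω ^ 2 - 2 * c * Y ω)
      (hY.integrable_sq.sub (hint.const_mul _)) (integrable_const _),
    integral_sub (f := fun ω => Y ω ^ 2) hY.integrable_sq (hint.const_mul _),
    integral_const_mul, integral_const, probReal_univ, one_smul]

lemma measureReal_lt_abs_sub_le_integral_sq_div {Ω : Type*} [MeasurableSpace Ω]
    {P : Measure Ω} [IsFiniteMeasure P] {Y : Ω → ℝ} {c : ℝ}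
    (hY : Integrable (fun ω => (Y ω - c) ^ 2) P) {ε : ℝ} (hε : 0 < ε) :
    P.real {ω | ε < |Y ω - c|} ≤ (∫ ω, (Y ω - c) ^ 2 ∂P) / ε ^ 2 := by
  have hsub : {ω | ε < |Y ω - c|} ⊆ {ω | ε ^ 2 ≤ (Y ω - c) ^ 2} := fun ω hω =>
    (sq_le_sq₀ hε.le (abs_nonneg _)).2 (le_of_lt hω) |>.trans_eq (sq_abs _)
  rw [le_div_iff₀ (by positivity), mul_comm]
  exact (mul_le_mul_of_nonneg_left (measureReal_mono hsub) (by positivity)).trans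
    (mul_meas_ge_le_integral_of_nonneg (ae_of_all _ fun ω => sq_nonneg _) hY _)

theorem tendsto_measure_lt_abs_sub_of_tendsto_moments {κ : Type*} {l : Filter κ}
    {Ω : κ → Type*} [∀ k, MeasurableSpace (Ω k)] {P : ∀ k, Measure (Ω k)}
    [∀ k, IsProbabilityMeasure (P k)] {Y : ∀ k, Ω k → ℝ} {c : ℝ}
    (hY : ∀ k, MemLp (Y k) 2 (P k))
    (h1 : Tendsto (fun k => ∫ ω, Y k ω ∂P k) l (𝓝 c))
    (h2 : Tendsto (fun k => ∫ ω, Y k ω ^ 2 ∂P k) l (𝓝 (c ^ 2))) {ε : ℝ} (hε : 0 < ε) :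
    Tendsto (fun k => P k {ω | ε < |Y k ω - c|}) l (𝓝 0) := by
  have hvar : Tendsto (fun k => (∫ ω, (Y k ω - c) ^ 2 ∂P k) / ε ^ 2) l (𝓝 0) := by
    simp_rw [fun k => integral_sub_const_sq (hY k) c]
    have := ((h2.sub (h1.const_mul (2 * c))).add_const (c ^ 2)).div_const (ε ^ 2)
    rwa [show (c ^ 2 - 2 * c * c + c ^ 2) / ε ^ 2 = 0 by ring] at this
  rw [← ENNReal.tendsto_toReal_iff (fun k => measure_ne_top _ _) ENNReal.zero_ne_top]
  refine squeeze_zero (fun k => ENNReal.toReal_nonneg) (fun k => ?_) hvar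
  exact measureReal_lt_abs_sub_le_integral_sq_div ((hY k).sub (memLp_const c)).integrable_sq hε

/-- Let `(E, d)` be a metric space and `ν` a Borel probability measure on `E`.
For each `n ≥ 1` (encoded as `n + 1`), let `F n` be a random element of `E ^ (Fin (n+1))`
defined on a probability space `(Ω n, P n)`, and let `o n`, `o' n` be two independent uniform
random elements of `Fin (n+1)`, independent of `F n`.  If the pair
`(F n (o n), F n (o' n))` converges in distribution to the product measure `ν ⊗ ν`, then
for every bounded continuous `h : E → ℝ`, the random variables
`(1/(n+1)) * ∑ v, h (F n v)` converge in probability to the constant `∫ h dν`. -/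
theorem local_convergence_in_probability_of_joint_two_root_convergence
    {E : Type*} [MetricSpace E] [MeasurableSpace E] [BorelSpace E]
    (ν : Measure E) [IsProbabilityMeasure ν]
    (Ω : ℕ → Type*) [∀ n, MeasurableSpace (Ω n)]
    (P : ∀ n, Measure (Ω n)) [∀ n, IsProbabilityMeasure (P n)]
    (F : ∀ n, Ω n → (Fin (n + 1) → E))
    (o o' : ∀ n, Ω n → Fin (n + 1))
    (hFmeas : ∀ n, Measurable (F n))
    (homeas : ∀ n, Measurable (o n)) (ho'meas : ∀ n, Measurable (o' n))
    -- `o n` and `o' n` are uniformly distributed on `Fin (n+1)`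
    (hunif : ∀ n, (P n).map (o n) = (PMF.uniformOfFintype (Fin (n + 1))).toMeasure)
    (hunif' : ∀ n, (P n).map (o' n) = (PMF.uniformOfFintype (Fin (n + 1))).toMeasure)
    -- `o n` and `o' n` are independent, and the pair `(o n, o' n)` is independent of `F n`
    (hoo' : ∀ n, IndepFun (o n) (o' n) (P n))
    (hFoo' : ∀ n, IndepFun (F n) (fun ω => (o n ω, o' n ω)) (P n))
    -- convergence in distribution of `(F n (o n), F n (o' n))` to `ν ⊗ ν`
    (hconv : ∀ g : BoundedContinuousFunction (E × E) ℝ,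
      Tendsto (fun n => ∫ ω, g (F n ω (o n ω), F n ω (o' n ω)) ∂(P n)) atTop
        (𝓝 (∫ p, g p ∂(ν.prod ν)))) :
    ∀ h : BoundedContinuousFunction E ℝ, ∀ ε > (0 : ℝ),
      Tendsto (fun n => P n {ω | ε <
          |(1 / (n + 1 : ℝ)) * ∑ v : Fin (n + 1), h (F n ω v) - ∫ x, h x ∂ν|}) atTop
        (𝓝 0) := by
  intro h ε hε
  have hcomp : ∀ n, Measurable fun (x : Fin (n + 1) → E) v => h (x v) := fun n =>
    measurable_pi_lambda _ fun v => h.continuous.measurable.comp (measurable_pi_apply v)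
  have hY : ∀ n, Measurable fun ω v => h (F n ω v) := fun n => (hcomp n).comp (hFmeas n)
  have hYL2 : ∀ n v, MemLp (fun ω => h (F n ω v)) 2 (P n) := fun n v =>
    .of_bound ((measurable_pi_apply v).comp (hY n)).aestronglyMeasurable ‖h‖
      (ae_of_all _ fun ω => h.norm_coe_le_norm _)
  have hcard : ∀ n, (Fintype.card (Fin (n + 1)) : ℝ)⁻¹ = 1 / (n + 1 : ℝ) := by simp
  have hmean : ∀ n, ∫ ω, h (F n ω (o n ω)) ∂(P n) =
      ∫ ω, 1 / (n + 1 : ℝ) * ∑ v, h (F n ω v) ∂(P n) := fun n => by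
    rw [← hcard, integral_apply_of_indepFun_uniform (hY n) (homeas n) (hunif n)
      ((hFoo' n).comp (hcomp n) measurable_fst) (fun v => (hYL2 n v).integrable one_le_two)]
  have hsecond : ∀ n, ∫ ω, h (F n ω (o n ω)) * h (F n ω (o' n ω)) ∂(P n) =
      ∫ ω, (1 / (n + 1 : ℝ) * ∑ v, h (F n ω v)) ^ 2 ∂(P n) := fun n => by
    rw [← hcard, integral_mul_apply_of_indepFun_uniform (hY n) (homeas n) (ho'meas n) (hunif n)
      (hunif' n) (hoo' n) ((hFoo' n).comp (hcomp n) measurable_id) (hYL2 n)]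
  refine tendsto_measure_lt_abs_sub_of_tendsto_moments (fun n => ?_) ?_ ?_ hε
  · exact (memLp_finsetSum _ fun v _ => hYL2 n v).const_mul _
  · simpa [hmean, integral_fun_fst] using hconv (h.compContinuous ContinuousMap.fst)
  · have hprod := hconv (h.compContinuous ContinuousMap.fst * h.compContinuous ContinuousMap.snd)
    simp only [BoundedContinuousFunction.mul_apply] at hprod
    simpa [hsecond, integral_prod_mul, sq] using hprod
end

section
/- For all natural numbers m ≤ n and every p ∈ [0,1], the total variation distance between the binomial distributions with m and n trials and success probability p satisfies d_TV(Bin(m,p), Bin(n,p)) = (1/2) Σ_{k ∈ ℕ} |Bin(m,p)(k) − Bin(n,p)(k)| ≤ (n − m)·p. -/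
/-- The binomial probability mass function on `ℕ` with `n` trials and success
probability `p`: `k ↦ C(n,k) p^k (1-p)^(n-k)`. -/
noncomputable def binomialPMFReal (n : ℕ) (p : ℝ) (k : ℕ) : ℝ :=
  (n.choose k : ℝ) * p ^ k * (1 - p) ^ (n - k)

noncomputable def shiftPMF (m : ℕ) (p : ℝ) : ℕ → ℝ
  | 0 => 0
  | (k+1) => binomialPMFReal m p k

lemma binom_zero_of_lt {n k : ℕ} (p : ℝ) (h : n < k) : binomialPMFReal n p k = 0 := by
  simp [binomialPMFReal, Nat.choose_eq_zero_of_lt h]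

lemma binom_nonneg {n k : ℕ} {p : ℝ} (hp0 : 0 ≤ p) (hp1 : p ≤ 1) :
    0 ≤ binomialPMFReal n p k := by
  have h : (0:ℝ) ≤ 1 - p := by linarith
  exact mul_nonneg (mul_nonneg (Nat.cast_nonneg _) (pow_nonneg hp0 _)) (pow_nonneg h _)

lemma binom_summable (n : ℕ) (p : ℝ) : Summable (binomialPMFReal n p) := by
  apply summable_of_ne_finset_zero (s := Finset.range (n+1))
  intro k hk
  exact binom_zero_of_lt p (by simpa using hk)

lemma binom_tsum (n : ℕ) (p : ℝ) : ∑' k, binomialPMFReal n p k = 1 := by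
  rw [tsum_eq_sum (s := Finset.range (n+1))
    (fun k hk => binom_zero_of_lt p (by simpa using hk))]
  have : ∑ k ∈ Finset.range (n+1), binomialPMFReal n p k = (p + (1-p))^n := by
    rw [add_pow]
    apply Finset.sum_congr rfl
    intro k hk
    simp [binomialPMFReal]; ring
  rw [this]; norm_num

lemma shift_summable (m : ℕ) (p : ℝ) : Summable (shiftPMF m p) := by
  apply summable_of_ne_finset_zero (s := Finset.range (m+2))
  intro k hk
  match k, hk with
  | 0, hk => simp at hk
  | (j+1), hk => exact binom_zero_of_lt p (by simp at hk; omega)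

lemma shift_tsum (m : ℕ) (p : ℝ) : ∑' k, shiftPMF m p k = 1 := by
  rw [Summable.tsum_eq_zero_add (shift_summable m p)]
  simp [shiftPMF, binom_tsum]

lemma shift_nonneg {m k : ℕ} {p : ℝ} (hp0 : 0 ≤ p) (hp1 : p ≤ 1) :
    0 ≤ shiftPMF m p k := by
  match k with
  | 0 => simp [shiftPMF]
  | (j+1) => exact binom_nonneg hp0 hp1

lemma binom_succ (m : ℕ) (p : ℝ) (k : ℕ) :
    binomialPMFReal (m+1) p k = p * shiftPMF m p k + (1 - p) * binomialPMFReal m p k := by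
  match k with
  | 0 => simp [binomialPMFReal, shiftPMF]; ring
  | (j+1) =>
    simp only [binomialPMFReal, shiftPMF]
    rcases lt_trichotomy j m with h | h | h
    · have e1 : m + 1 - (j+1) = (m - (j+1)) + 1 := by omega
      have e2 : m - j = (m - (j+1)) + 1 := by omega
      rw [e1, e2, Nat.choose_succ_succ]
      push_cast
      ring
    · subst h
      simp [Nat.choose_self, Nat.choose_eq_zero_of_lt (Nat.lt_succ_self j)]
      ring
    · rw [Nat.choose_eq_zero_of_lt (by omega : m + 1 < j + 1),
        Nat.choose_eq_zero_of_lt h, Nat.choose_eq_zero_of_lt (by omega : m < j + 1)]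
      simp

lemma absdiff_summable (m n : ℕ) (p : ℝ) :
    Summable (fun k => |binomialPMFReal m p k - binomialPMFReal n p k|) := by
  apply summable_of_ne_finset_zero (s := Finset.range (max m n + 1))
  intro k hk
  simp only [Finset.mem_range] at hk
  rw [binom_zero_of_lt p (by omega), binom_zero_of_lt p (by omega)]
  simp

lemma step_bound (m : ℕ) (p : ℝ) (hp0 : 0 ≤ p) (hp1 : p ≤ 1) :
    ∑' k, |binomialPMFReal m p k - binomialPMFReal (m+1) p k| ≤ 2 * p := by
  have key : ∀ k, |binomialPMFReal m p k - binomialPMFReal (m+1) p k|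
      ≤ p * (binomialPMFReal m p k + shiftPMF m p k) := by
    intro k
    rw [binom_succ]
    have : binomialPMFReal m p k - (p * shiftPMF m p k + (1-p) * binomialPMFReal m p k)
        = p * (binomialPMFReal m p k - shiftPMF m p k) := by ring
    rw [this, abs_mul, abs_of_nonneg hp0]
    gcongr
    calc |binomialPMFReal m p k - shiftPMF m p k|
        ≤ |binomialPMFReal m p k| + |shiftPMF m p k| := abs_sub _ _
      _ = binomialPMFReal m p k + shiftPMF m p k := by
          rw [abs_of_nonneg (binom_nonneg hp0 hp1), abs_of_nonneg (shift_nonneg hp0 hp1)]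
  have hs : Summable (fun k => p * (binomialPMFReal m p k + shiftPMF m p k)) :=
    (((binom_summable m p).add (shift_summable m p)).mul_left p)
  calc ∑' k, |binomialPMFReal m p k - binomialPMFReal (m+1) p k|
      ≤ ∑' k, p * (binomialPMFReal m p k + shiftPMF m p k) :=
        Summable.tsum_le_tsum key (absdiff_summable m (m+1) p) hs
    _ = p * ((∑' k, binomialPMFReal m p k) + ∑' k, shiftPMF m p k) := by
        rw [tsum_mul_left, Summable.tsum_add (binom_summable m p) (shift_summable m p)]
    _ = 2 * p := by rw [binom_tsum, shift_tsum]; ring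

/-- For `m ≤ n` and `p ∈ [0,1]`, the total variation distance between
the binomial distributions `Bin(m,p)` and `Bin(n,p)` is at most `(n - m) · p`. -/
theorem totalVariation_binomial_binomial_le
    (m n : ℕ) (hmn : m ≤ n) (p : ℝ) (hp0 : 0 ≤ p) (hp1 : p ≤ 1) :
    (1 / 2) * ∑' k : ℕ, |binomialPMFReal m p k - binomialPMFReal n p k| ≤
      ((n : ℝ) - (m : ℝ)) * p := by
  obtain ⟨d, rfl⟩ := Nat.exists_eq_add_of_le hmn
  clear hmn
  induction d with
  | zero => simp
  | succ d ih =>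
    have tri : ∀ k, |binomialPMFReal m p k - binomialPMFReal (m + (d+1)) p k|
        ≤ |binomialPMFReal m p k - binomialPMFReal (m + d) p k|
          + |binomialPMFReal (m + d) p k - binomialPMFReal (m + d + 1) p k| := by
      intro k
      have : m + (d+1) = m + d + 1 := by omega
      rw [this]
      exact abs_sub_le _ _ _
    have hsum : Summable (fun k => |binomialPMFReal m p k - binomialPMFReal (m + d) p k|
        + |binomialPMFReal (m + d) p k - binomialPMFReal (m + d + 1) p k|) :=
      (absdiff_summable m (m+d) p).add (absdiff_summable (m+d) (m+d+1) p)
    have h1 : ∑' k, |binomialPMFReal m p k - binomialPMFReal (m + (d+1)) p k|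
        ≤ (∑' k, |binomialPMFReal m p k - binomialPMFReal (m + d) p k|)
          + ∑' k, |binomialPMFReal (m + d) p k - binomialPMFReal (m + d + 1) p k| := by
      calc _ ≤ _ := Summable.tsum_le_tsum tri (absdiff_summable m (m + (d+1)) p) hsum
        _ = _ := Summable.tsum_add (absdiff_summable m (m+d) p) (absdiff_summable (m+d) (m+d+1) p)
    have h2 := step_bound (m + d) p hp0 hp1
    have := ih
    push_cast
    push_cast at this
    nlinarith [h1, h2, this]
end

section
/- For all real λ ≥ 0 and μ ≥ 0, the total variation distance between the Poisson distributions with means λ and μ satisfies d_TV(Poi(λ), Poi(μ)) = (1/2) Σ_{k ∈ ℕ} |Poi(λ)(k) − Poi(μ)(k)| ≤ |λ − μ|. -/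
/-- The Poisson probability mass function on `ℕ` with mean `λ`:
`k ↦ e^(-λ) λ^k / k!`. -/
noncomputable def poissonPMFReal' (l : ℝ) (k : ℕ) : ℝ :=
  Real.exp (-l) * l ^ k / (Nat.factorial k : ℝ)

/-!
The Poisson weights satisfy `∂ₜ p_t(k) = p_t(k-1) - p_t(k)`, so for `t ≥ 0` the velocity of
`t ↦ p_t` has `ℓ¹`-norm at most `2`. The mean value theorem, applied to the pairing of `p_t` with
the signs of `p_m - p_l`, then bounds every partial sum of `∑ₖ |p_l(k) - p_m(k)|` by `2 |l - m|`.
-/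

open Finset

theorem sum_abs_sub_le_of_hasDerivAt {ι : Type*} {s : Finset ι} {D : Set ℝ} {f f' : ℝ → ι → ℝ}
    {C a b : ℝ} (hD : Convex ℝ D) (hf : ∀ t ∈ D, ∀ i ∈ s, HasDerivAt (f · i) (f' t i) t)
    (hC : ∀ t ∈ D, ∑ i ∈ s, |f' t i| ≤ C) (ha : a ∈ D) (hb : b ∈ D) :
    ∑ i ∈ s, |f b i - f a i| ≤ C * |b - a| := by
  set σ : ι → ℝ := fun i => SignType.sign (f b i - f a i)
  have hφ : ∀ t ∈ D, HasDerivWithinAt (fun t => ∑ i ∈ s, σ i * f t i)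
      (∑ i ∈ s, σ i * f' t i) D t := fun t ht =>
    (HasDerivAt.fun_sum fun i hi => (hf t ht i hi).const_mul (σ i)).hasDerivWithinAt
  have hσ : ∀ i, |σ i| ≤ 1 := fun i => by
    simp only [σ]; rcases lt_trichotomy (f b i - f a i) 0 with h | h | h <;> simp [h]
  have hφ' : ∀ t ∈ D, ‖∑ i ∈ s, σ i * f' t i‖ ≤ C := fun t ht => calc
    ‖∑ i ∈ s, σ i * f' t i‖ ≤ ∑ i ∈ s, |σ i * f' t i| := norm_sum_le _ _
    _ ≤ ∑ i ∈ s, |f' t i| := sum_le_sum fun i _ => by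
      rw [abs_mul]; exact mul_le_of_le_one_left (abs_nonneg _) (hσ i)
    _ ≤ C := hC t ht
  calc ∑ i ∈ s, |f b i - f a i|
      = ∑ i ∈ s, σ i * f b i - ∑ i ∈ s, σ i * f a i := by
        rw [← sum_sub_distrib]; simp only [σ, ← mul_sub, sign_mul_self]
    _ ≤ ‖∑ i ∈ s, σ i * f b i - ∑ i ∈ s, σ i * f a i‖ := le_abs_self _
    _ ≤ C * |b - a| := Convex.norm_image_sub_le_of_norm_hasDerivWithin_le hφ hφ' hD ha hb

lemma poissonPMFReal'_nonneg {t : ℝ} (ht : 0 ≤ t) (k : ℕ) : 0 ≤ poissonPMFReal' t k := by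
  unfold poissonPMFReal'; positivity

lemma sum_range_poissonPMFReal'_le_one {t : ℝ} (ht : 0 ≤ t) (n : ℕ) :
    ∑ k ∈ range n, poissonPMFReal' t k ≤ 1 := by
  have hexp := Real.sum_le_exp_of_nonneg ht n
  calc ∑ k ∈ range n, poissonPMFReal' t k
      = Real.exp (-t) * ∑ k ∈ range n, t ^ k / k.factorial := by
        simp only [poissonPMFReal', mul_sum, mul_div_assoc]
    _ ≤ Real.exp (-t) * Real.exp t := by gcongr
    _ = 1 := by rw [← Real.exp_add, neg_add_cancel, Real.exp_zero]

noncomputable def poissonPMFDeriv (t : ℝ) : ℕ → ℝ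
  | 0 => -poissonPMFReal' t 0
  | k + 1 => poissonPMFReal' t k - poissonPMFReal' t (k + 1)

lemma hasDerivAt_poissonPMFReal' (t : ℝ) (k : ℕ) :
    HasDerivAt (poissonPMFReal' · k) (poissonPMFDeriv t k) t := by
  have h := (((hasDerivAt_neg t).exp).mul (hasDerivAt_pow k t)).div_const (k.factorial : ℝ)
  refine h.congr_deriv ?_
  cases k with
  | zero => simp [poissonPMFDeriv, poissonPMFReal']
  | succ k =>
    simp only [poissonPMFDeriv, poissonPMFReal', Nat.factorial_succ, Nat.cast_mul,
      Nat.add_sub_cancel]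
    have : (k.factorial : ℝ) ≠ 0 := by positivity
    field_simp
    push_cast
    ring

lemma sum_range_abs_poissonPMFDeriv_le_two {t : ℝ} (ht : 0 ≤ t) (n : ℕ) :
    ∑ k ∈ range n, |poissonPMFDeriv t k| ≤ 2 := by
  cases n with
  | zero => simp
  | succ n =>
    have hp := poissonPMFReal'_nonneg ht
    calc ∑ k ∈ range (n + 1), |poissonPMFDeriv t k|
        = ∑ k ∈ range n, |poissonPMFReal' t k - poissonPMFReal' t (k + 1)|
          + |poissonPMFReal' t 0| := by
          rw [sum_range_succ', poissonPMFDeriv, abs_neg]; rfl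
      _ ≤ ∑ k ∈ range n, (poissonPMFReal' t k + poissonPMFReal' t (k + 1))
          + poissonPMFReal' t 0 := by
          gcongr with k
          · exact (abs_sub _ _).trans_eq (by rw [abs_of_nonneg (hp _), abs_of_nonneg (hp _)])
          · exact (abs_of_nonneg (hp 0)).le
      _ = ∑ k ∈ range n, poissonPMFReal' t k + ∑ k ∈ range (n + 1), poissonPMFReal' t k := by
          rw [sum_add_distrib, sum_range_succ' _ n, add_assoc]
      _ ≤ 2 := by
          linarith [sum_range_poissonPMFReal'_le_one ht n,
            sum_range_poissonPMFReal'_le_one ht (n + 1)]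

/-- For `λ, μ ≥ 0`, the total variation distance between the Poisson
distributions with means `λ` and `μ` is at most `|λ - μ|`. -/
theorem totalVariation_poisson_poisson_le
    (l m : ℝ) (hl : 0 ≤ l) (hm : 0 ≤ m) :
    (1 / 2) * ∑' k : ℕ, |poissonPMFReal' l k - poissonPMFReal' m k| ≤ |l - m| := by
  have hpartial : ∀ n, ∑ k ∈ range n, |poissonPMFReal' l k - poissonPMFReal' m k|
      ≤ 2 * |l - m| := fun n =>
    sum_abs_sub_le_of_hasDerivAt (convex_Ici 0)
      (fun t _ k _ => hasDerivAt_poissonPMFReal' t k)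
      (fun t ht => sum_range_abs_poissonPMFDeriv_le_two ht n) hm hl
  have := Real.tsum_le_of_sum_range_le (fun k => abs_nonneg _) hpartial
  linarith
end

section
/- Let n ≥ 1 be a natural number, κ a real number with 0 ≤ κ ≤ n, b and n_y natural numbers with b ≤ n_y ≤ n, and μ_y ∈ [0,1]. Then the total variation distance between the binomial distribution with n_y − b trials and success probability κ/n and the Poisson distribution with mean κ·μ_y satisfies d_TV(Bin(n_y − b, κ/n), Poi(κ μ_y)) ≤ κ·((b + 1)/n + |n_y/n − μ_y|). -/
/-!
Split at `Poi(m p)` with `m = n_y - b`, `p = κ / n`. Two Poisson laws compare pointwise,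
`Poi(a + e) ≥ e⁻ᵉ Poi(a)`, so they are within `1 - e⁻ᵉ ≤ e` in total variation. For
`Bin(m, p)` against `Poi(m p)` we use the Stein–Chen method: for every finite `A`, the solution
`f` of `l f(j+1) - j f(j) = 1_A(j) - Poi(l)(A)` has increments at most `1 / l`, and the binomial
identity `E[l f(W+1) - W f(W)] = m p² E[f(W'+2) - f(W'+1)]`, `W' ∼ Bin(m-1, p)`, then gives
`Bin(A) - Poi(A) ≤ p`. Finally `|m p - κ μ_y| ≤ κ b / n + κ |n_y / n - μ_y|`.
-/

open Finset
open scoped Nat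

theorem tsum_abs_sub_le_of_forall_sum_sub_le {α : Type*} {P Q : α → ℝ} {ε : ℝ}
    (hP : HasSum P 1) (hQ : HasSum Q 1) (h : ∀ A : Finset α, ∑ a ∈ A, (P a - Q a) ≤ ε) :
    ∑' a, |P a - Q a| ≤ 2 * ε := by
  have hd : HasSum (fun a => P a - Q a) 0 := by simpa using hP.sub hQ
  have hpos : Summable fun a => max (P a - Q a) 0 :=
    hd.summable.abs.of_nonneg_of_le (fun _ => le_max_right _ _)
      (fun _ => max_le (le_abs_self _) (abs_nonneg _))
  have habs : ∀ a, |P a - Q a| = 2 * max (P a - Q a) 0 - (P a - Q a) := by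
    intro a
    rcases le_total (P a - Q a) 0 with hle | hle
    · rw [abs_of_nonpos hle, max_eq_right hle]; ring
    · rw [abs_of_nonneg hle, max_eq_left hle]; ring
  have hpos_le : ∑' a, max (P a - Q a) 0 ≤ ε := by
    refine hpos.tsum_le_of_sum_le fun A => ?_
    calc ∑ a ∈ A, max (P a - Q a) 0 = ∑ a ∈ A with 0 ≤ P a - Q a, (P a - Q a) := by
          rw [sum_filter]
          exact sum_congr rfl fun a _ => by
            split_ifs with hle
            exacts [max_eq_left hle, max_eq_right (le_of_not_ge hle)]
      _ ≤ ε := h _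
  rw [tsum_congr habs, ((hpos.hasSum.mul_left 2).sub hd).tsum_eq]
  linarith

theorem tsum_abs_sub_le_tsum_abs_sub_add_tsum_abs_sub {α : Type*} {P Q R : α → ℝ}
    (hP : Summable P) (hQ : Summable Q) (hR : Summable R) :
    ∑' a, |P a - R a| ≤ ∑' a, |P a - Q a| + ∑' a, |Q a - R a| := by
  rw [← ((hP.sub hQ).abs).tsum_add (hQ.sub hR).abs]
  exact (hP.sub hR).abs.tsum_le_tsum (fun a => abs_sub_le _ _ _)
    ((hP.sub hQ).abs.add (hQ.sub hR).abs)

theorem poissonPMFReal'_nonneg_s3 {l : ℝ} (hl : 0 ≤ l) (k : ℕ) : 0 ≤ poissonPMFReal' l k := by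
  unfold poissonPMFReal'
  positivity

theorem hasSum_poissonPMFReal' (l : ℝ) : HasSum (poissonPMFReal' l) 1 := by
  have h := (NormedSpace.expSeries_div_hasSum_exp l).mul_left (Real.exp (-l))
  rw [← Real.exp_eq_exp_ℝ, ← Real.exp_add, neg_add_cancel, Real.exp_zero] at h
  have hpmf : poissonPMFReal' l = fun k => Real.exp (-l) * (l ^ k / k !) :=
    funext fun k => mul_div_assoc _ _ _
  rwa [hpmf]

theorem exp_neg_mul_poissonPMFReal'_le {a e : ℝ} (ha : 0 ≤ a) (he : 0 ≤ e) (k : ℕ) :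
    Real.exp (-e) * poissonPMFReal' a k ≤ poissonPMFReal' (a + e) k := by
  unfold poissonPMFReal'
  rw [show -(a + e) = -e + -a by ring, Real.exp_add]
  simp only [mul_assoc, mul_div_assoc]
  gcongr
  linarith

theorem tsum_abs_poissonPMFReal'_sub_le {a b : ℝ} (ha : 0 ≤ a) (hb : 0 ≤ b) :
    ∑' k, |poissonPMFReal' a k - poissonPMFReal' b k| ≤ 2 * |a - b| := by
  wlog hab : a ≤ b generalizing a b
  · simp_rw [abs_sub_comm (poissonPMFReal' a _), abs_sub_comm a]
    exact this hb ha (le_of_not_ge hab)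
  obtain ⟨e, he, rfl⟩ : ∃ e, 0 ≤ e ∧ b = a + e := ⟨b - a, by linarith, by ring⟩
  refine tsum_abs_sub_le_of_forall_sum_sub_le (hasSum_poissonPMFReal' a)
    (hasSum_poissonPMFReal' (a + e)) fun A => ?_
  have hexp : 0 ≤ 1 - Real.exp (-e) := by simp [he]
  calc ∑ k ∈ A, (poissonPMFReal' a k - poissonPMFReal' (a + e) k)
      ≤ ∑ k ∈ A, (1 - Real.exp (-e)) * poissonPMFReal' a k :=
        sum_le_sum fun k _ => by linarith [exp_neg_mul_poissonPMFReal'_le ha he k]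
    _ = (1 - Real.exp (-e)) * ∑ k ∈ A, poissonPMFReal' a k := (mul_sum _ _ _).symm
    _ ≤ (1 - Real.exp (-e)) * 1 := by
        gcongr
        exact sum_le_hasSum A (fun k _ => poissonPMFReal'_nonneg_s3 ha k) (hasSum_poissonPMFReal' a)
    _ ≤ |a - (a + e)| := by
        rw [mul_one, sub_add_cancel_left, abs_neg, abs_of_nonneg he]
        linarith [Real.add_one_le_exp (-e)]

theorem binomialPMFReal_nonneg {p : ℝ} (hp0 : 0 ≤ p) (hp1 : p ≤ 1) (m k : ℕ) :
    0 ≤ binomialPMFReal m p k := by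
  have : 0 ≤ 1 - p := by linarith
  unfold binomialPMFReal
  positivity

theorem binomialPMFReal_eq_zero_of_lt {m k : ℕ} (p : ℝ) (h : m < k) : binomialPMFReal m p k = 0 := by
  simp [binomialPMFReal, Nat.choose_eq_zero_of_lt h]

theorem sum_range_binomialPMFReal (m : ℕ) (p : ℝ) :
    ∑ k ∈ range (m + 1), binomialPMFReal m p k = 1 := by
  have h := add_pow p (1 - p) m
  rw [add_sub_cancel, one_pow] at h
  rw [h]
  exact sum_congr rfl fun k _ => by unfold binomialPMFReal; ring

theorem hasSum_binomialPMFReal (m : ℕ) (p : ℝ) : HasSum (binomialPMFReal m p) 1 :=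
  sum_range_binomialPMFReal m p ▸ hasSum_sum_of_ne_finset_zero fun _ hk =>
    binomialPMFReal_eq_zero_of_lt p (by simpa using hk)

theorem sum_binomialPMFReal_eq_sum_range_ite (m : ℕ) (p : ℝ) (A : Finset ℕ) :
    ∑ k ∈ A, binomialPMFReal m p k =
      ∑ k ∈ range (m + 1), if k ∈ A then binomialPMFReal m p k else 0 := by
  rw [sum_ite_mem]
  refine (sum_subset inter_subset_right fun k hkA hk => ?_).symm
  exact binomialPMFReal_eq_zero_of_lt p (by simpa [hkA] using hk)

theorem binomialPMFReal_succ_zero (m : ℕ) (p : ℝ) :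
    binomialPMFReal (m + 1) p 0 = (1 - p) * binomialPMFReal m p 0 := by
  simp [binomialPMFReal, pow_succ, mul_comm]

theorem binomialPMFReal_succ_succ (m k : ℕ) (p : ℝ) :
    binomialPMFReal (m + 1) p (k + 1) =
      p * binomialPMFReal m p k + (1 - p) * binomialPMFReal m p (k + 1) := by
  unfold binomialPMFReal
  rw [Nat.choose_succ_succ, Nat.cast_add, Nat.add_sub_add_right]
  rcases lt_or_ge k m with hkm | hmk
  · rw [show m - k = m - (k + 1) + 1 by omega]
    ring
  · rw [Nat.choose_eq_zero_of_lt (by omega : m < k + 1)]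
    ring

theorem sum_range_binomialPMFReal_succ_mul (m : ℕ) (p : ℝ) (h : ℕ → ℝ) :
    ∑ k ∈ range (m + 2), binomialPMFReal (m + 1) p k * h k =
      ∑ k ∈ range (m + 1), binomialPMFReal m p k * ((1 - p) * h k + p * h (k + 1)) := by
  have hshift : ∑ k ∈ range (m + 1), binomialPMFReal m p (k + 1) * h (k + 1) +
      binomialPMFReal m p 0 * h 0 = ∑ k ∈ range (m + 1), binomialPMFReal m p k * h k := by
    rw [← sum_range_succ' (fun k => binomialPMFReal m p k * h k), sum_range_succ,
      binomialPMFReal_eq_zero_of_lt p (lt_add_one m), zero_mul, add_zero]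
  calc ∑ k ∈ range (m + 2), binomialPMFReal (m + 1) p k * h k
      = p * ∑ k ∈ range (m + 1), binomialPMFReal m p k * h (k + 1) +
          (1 - p) * (∑ k ∈ range (m + 1), binomialPMFReal m p (k + 1) * h (k + 1) +
            binomialPMFReal m p 0 * h 0) := by
        simp only [sum_range_succ' _ (m + 1), binomialPMFReal_succ_succ, binomialPMFReal_succ_zero,
          add_mul, sum_add_distrib, mul_assoc, ← mul_sum]
        ring
    _ = ∑ k ∈ range (m + 1), binomialPMFReal m p k * ((1 - p) * h k + p * h (k + 1)) := by
        rw [hshift, mul_sum, mul_sum, ← sum_add_distrib]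
        exact sum_congr rfl fun _ _ => by ring

theorem sum_range_natCast_mul_binomialPMFReal_succ (m : ℕ) (p : ℝ) (g : ℕ → ℝ) :
    ∑ k ∈ range (m + 2), k * binomialPMFReal (m + 1) p k * g k =
      (m + 1) * p * ∑ k ∈ range (m + 1), binomialPMFReal m p k * g (k + 1) := by
  rw [sum_range_succ', mul_sum]
  simp only [Nat.cast_zero, zero_mul, add_zero]
  refine sum_congr rfl fun k hk => ?_
  have hchoose : ((k + 1 : ℕ) : ℝ) * (m + 1).choose (k + 1) = (m + 1) * m.choose k := by
    exact_mod_cast (Nat.mul_comm _ _).trans (Nat.add_one_mul_choose_eq m k).symm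
  unfold binomialPMFReal
  rw [Nat.add_sub_add_right]
  linear_combination (p ^ (k + 1) * (1 - p) ^ (m - k) * g (k + 1)) * hchoose

theorem sum_range_binomialPMFReal_mul_stein (m : ℕ) (p : ℝ) (g : ℕ → ℝ) :
    ∑ k ∈ range (m + 2), binomialPMFReal (m + 1) p k * ((m + 1) * p * g (k + 1) - k * g k) =
      (m + 1) * p ^ 2 * ∑ k ∈ range (m + 1), binomialPMFReal m p k * (g (k + 2) - g (k + 1)) := by
  have hfirst : ∑ k ∈ range (m + 2), binomialPMFReal (m + 1) p k * ((m + 1) * p * g (k + 1)) =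
      (m + 1) * p * ∑ k ∈ range (m + 1),
        binomialPMFReal m p k * ((1 - p) * g (k + 1) + p * g (k + 2)) := by
    rw [← sum_range_binomialPMFReal_succ_mul, mul_sum]
    exact sum_congr rfl fun _ _ => by ring
  have hsecond : ∑ k ∈ range (m + 2), binomialPMFReal (m + 1) p k * (k * g k) =
      (m + 1) * p * ∑ k ∈ range (m + 1), binomialPMFReal m p k * g (k + 1) := by
    rw [← sum_range_natCast_mul_binomialPMFReal_succ]
    exact sum_congr rfl fun _ _ => by ring
  conv_lhs => simp only [mul_sub, sum_sub_distrib]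
  rw [hfirst, hsecond, ← mul_sub, ← sum_sub_distrib, mul_sum, mul_sum]
  exact sum_congr rfl fun _ _ => by ring

noncomputable def expPartialSum (l : ℝ) (j : ℕ) : ℝ := ∑ k ∈ range (j + 1), l ^ k / k !

theorem hasSum_pow_div_factorial_add (l : ℝ) (j : ℕ) :
    HasSum (fun s => l ^ (s + (j + 1)) / (s + (j + 1))!) (Real.exp l - expPartialSum l j) := by
  rw [Real.exp_eq_exp_ℝ]
  exact (hasSum_nat_add_iff' (j + 1)).2 (NormedSpace.expSeries_div_hasSum_exp l)

theorem div_mul_expPartialSum_le {l : ℝ} (hl : 0 ≤ l) (i : ℕ) :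
    l / (i + 1) * expPartialSum l i ≤ expPartialSum l (i + 1) := by
  unfold expPartialSum
  rw [sum_range_succ' _ (i + 1), mul_sum]
  refine le_add_of_le_of_nonneg (sum_le_sum fun k hk => ?_) (by positivity)
  have hk : (k + 1 : ℝ) ≤ i + 1 := by exact_mod_cast Nat.succ_le_succ (Nat.lt_succ_iff.1 (mem_range.1 hk))
  rw [pow_succ, Nat.factorial_succ, Nat.cast_mul, Nat.cast_succ, div_mul_div_comm]
  rw [show l ^ k * l / ((k + 1) * k !) = l * l ^ k / ((k + 1) * k !) by ring]
  gcongr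

-- For `X ∼ Poi(l)`, `e⁻ˡ lʲ⁺¹ / j!` times these two are `P(X ≤ j)` and `P(X > j)`.
noncomputable def poissonSteinLower (l : ℝ) (j : ℕ) : ℝ := j ! / l ^ (j + 1) * expPartialSum l j

noncomputable def poissonSteinUpper (l : ℝ) (j : ℕ) : ℝ :=
  j ! / l ^ (j + 1) * (Real.exp l - expPartialSum l j)

theorem poissonSteinLower_le_succ {l : ℝ} (hl : 0 < l) (j : ℕ) :
    poissonSteinLower l j ≤ poissonSteinLower l (j + 1) := by
  unfold poissonSteinLower expPartialSum
  rw [sum_range_succ' _ (j + 1), mul_sum, mul_add, mul_sum]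
  refine le_add_of_le_of_nonneg (sum_le_sum fun k hk => ?_) (by positivity)
  have hk : (k + 1 : ℝ) ≤ j + 1 := by exact_mod_cast Nat.succ_le_succ (Nat.lt_succ_iff.1 (mem_range.1 hk))
  have hratio : (j + 1)! / l ^ (j + 1 + 1) * (l ^ (k + 1) / (k + 1)!) =
      (j + 1) / (k + 1) * (j ! / l ^ (j + 1) * (l ^ k / k !)) := by
    push_cast [Nat.factorial_succ]
    field_simp
    ring
  rw [hratio]
  exact le_mul_of_one_le_left (by positivity) ((one_le_div (by positivity)).2 hk)

theorem hasSum_poissonSteinUpper {l : ℝ} (hl : l ≠ 0) (j : ℕ) :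
    HasSum (fun s => j ! * l ^ s / (s + (j + 1))!) (poissonSteinUpper l j) := by
  have hterm : (fun s => j ! * l ^ s / (s + (j + 1))!) =
      fun s => j ! / l ^ (j + 1) * (l ^ (s + (j + 1)) / (s + (j + 1))!) :=
    funext fun s => by field_simp; ring
  rw [hterm]
  exact (hasSum_pow_div_factorial_add l j).mul_left _

theorem poissonSteinUpper_succ_le {l : ℝ} (hl : 0 < l) (j : ℕ) :
    poissonSteinUpper l (j + 1) ≤ poissonSteinUpper l j := by
  refine hasSum_le (fun s => ?_) (hasSum_poissonSteinUpper hl.ne' (j + 1))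
    (hasSum_poissonSteinUpper hl.ne' j)
  have hratio : ((j + 1)! * l ^ s / (s + (j + 1 + 1))! : ℝ) =
      (j + 1) / (s + j + 2) * (j ! * l ^ s / (s + (j + 1))!) := by
    rw [show s + (j + 1 + 1) = s + (j + 1) + 1 by ring]
    push_cast [Nat.factorial_succ]
    field_simp
    ring
  rw [hratio]
  refine mul_le_of_le_one_left (by positivity) ((div_le_one (by positivity)).2 ?_)
  linarith [(s.cast_nonneg : (0 : ℝ) ≤ s)]

theorem poissonPMFReal'_succ_mul_upper_add_lower_le {l : ℝ} (hl : 0 < l) (i : ℕ) :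
    poissonPMFReal' l (i + 1) * (poissonSteinUpper l (i + 1) + poissonSteinLower l i) ≤ 1 / l := by
  have hsplit : poissonPMFReal' l (i + 1) * (poissonSteinUpper l (i + 1) + poissonSteinLower l i) =
      Real.exp (-l) / l * (Real.exp l - expPartialSum l (i + 1) + l / (i + 1) * expPartialSum l i) := by
    unfold poissonPMFReal' poissonSteinUpper poissonSteinLower
    push_cast [Nat.factorial_succ]
    field_simp
    ring
  rw [hsplit, Real.exp_neg]
  have := div_mul_expPartialSum_le hl.le i
  calc (Real.exp l)⁻¹ / l * (Real.exp l - expPartialSum l (i + 1) + l / (i + 1) * expPartialSum l i)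
      ≤ (Real.exp l)⁻¹ / l * Real.exp l := by gcongr; linarith
    _ = 1 / l := by field_simp

-- Multiplying the Stein equation by `lʲ / j!` telescopes it: `lʲ⁺¹ f(j+1) / j!` is the
-- partial sum of `h k lᵏ / k!`.
noncomputable def poissonSteinSolution (l : ℝ) (h : ℕ → ℝ) : ℕ → ℝ
  | 0 => 0
  | j + 1 => j ! / l ^ (j + 1) * ∑ k ∈ range (j + 1), h k * (l ^ k / k !)

theorem poissonSteinSolution_stein {l : ℝ} (hl : l ≠ 0) (h : ℕ → ℝ) (j : ℕ) :
    l * poissonSteinSolution l h (j + 1) - j * poissonSteinSolution l h j = h j := by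
  cases j with
  | zero => simp [poissonSteinSolution, hl]
  | succ j =>
    simp only [poissonSteinSolution, sum_range_succ _ (j + 1)]
    push_cast [Nat.factorial_succ]
    field_simp
    ring

theorem poissonSteinSolution_sum {ι : Type*} (l : ℝ) (s : Finset ι) (h : ι → ℕ → ℝ) (j : ℕ) :
    poissonSteinSolution l (fun k => ∑ i ∈ s, h i k) j = ∑ i ∈ s, poissonSteinSolution l (h i) j := by
  cases j with
  | zero => simp [poissonSteinSolution]
  | succ j => simp only [poissonSteinSolution, sum_mul, mul_sum]; exact sum_comm

theorem poissonSteinSolution_single (l : ℝ) (i j : ℕ) :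
    poissonSteinSolution l (fun k => (if k = i then 1 else 0) - poissonPMFReal' l i) (j + 1) =
      j ! / l ^ (j + 1) * ((if i ≤ j then l ^ i / i ! else 0) -
        poissonPMFReal' l i * expPartialSum l j) := by
  simp [poissonSteinSolution, sub_mul, sum_sub_distrib, ite_mul, expPartialSum, mul_sum]

theorem poissonSteinSolution_single_of_lt {l : ℝ} {i j : ℕ} (hji : j < i) :
    poissonSteinSolution l (fun k => (if k = i then 1 else 0) - poissonPMFReal' l i) (j + 1) =
      -(poissonPMFReal' l i * poissonSteinLower l j) := by
  rw [poissonSteinSolution_single, if_neg (by omega), poissonSteinLower]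
  ring

theorem poissonSteinSolution_single_of_le (l : ℝ) {i j : ℕ} (hij : i ≤ j) :
    poissonSteinSolution l (fun k => (if k = i then 1 else 0) - poissonPMFReal' l i) (j + 1) =
      poissonPMFReal' l i * poissonSteinUpper l j := by
  have hpow : l ^ i / i ! = Real.exp l * poissonPMFReal' l i := by
    rw [poissonPMFReal', ← mul_div_assoc, ← mul_assoc, ← Real.exp_add, add_neg_cancel, Real.exp_zero,
      one_mul]
  rw [poissonSteinSolution_single, if_pos hij, hpow, poissonSteinUpper]
  ring

theorem poissonSteinSolution_single_succ_sub_le {l : ℝ} (hl : 0 < l) (i j : ℕ) :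
    poissonSteinSolution l (fun k => (if k = i then 1 else 0) - poissonPMFReal' l i) (j + 2) -
        poissonSteinSolution l (fun k => (if k = i then 1 else 0) - poissonPMFReal' l i) (j + 1) ≤
      if i = j + 1 then 1 / l else 0 := by
  have hπ := poissonPMFReal'_nonneg_s3 hl.le (l := l) i
  rcases lt_trichotomy i (j + 1) with hij | rfl | hji
  · rw [if_neg hij.ne, poissonSteinSolution_single_of_le l hij.le,
      poissonSteinSolution_single_of_le l (by omega), ← mul_sub]
    exact mul_nonpos_of_nonneg_of_nonpos hπ (sub_nonpos.2 (poissonSteinUpper_succ_le hl j))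
  · rw [if_pos rfl, poissonSteinSolution_single_of_le l le_rfl,
      poissonSteinSolution_single_of_lt (lt_add_one j), sub_neg_eq_add, ← mul_add]
    exact poissonPMFReal'_succ_mul_upper_add_lower_le hl j
  · rw [if_neg hji.ne', poissonSteinSolution_single_of_lt hji, poissonSteinSolution_single_of_lt (by omega),
      neg_sub_neg, ← mul_sub]
    exact mul_nonpos_of_nonneg_of_nonpos hπ (sub_nonpos.2 (poissonSteinLower_le_succ hl j))

theorem poissonSteinSolution_indicator_succ_sub_le {l : ℝ} (hl : 0 < l) (A : Finset ℕ) (j : ℕ) :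
    poissonSteinSolution l (fun k => (if k ∈ A then 1 else 0) - ∑ i ∈ A, poissonPMFReal' l i) (j + 2) -
        poissonSteinSolution l (fun k => (if k ∈ A then 1 else 0) - ∑ i ∈ A, poissonPMFReal' l i) (j + 1) ≤
      1 / l := by
  have hsingle : (fun k => (if k ∈ A then 1 else 0) - ∑ i ∈ A, poissonPMFReal' l i) =
      fun k => ∑ i ∈ A, ((if k = i then 1 else 0) - poissonPMFReal' l i) := by
    funext k
    rw [sum_sub_distrib, sum_ite_eq]
  rw [hsingle, poissonSteinSolution_sum, poissonSteinSolution_sum, ← sum_sub_distrib]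
  calc _ ≤ ∑ i ∈ A, if i = j + 1 then 1 / l else 0 :=
        sum_le_sum fun i _ => poissonSteinSolution_single_succ_sub_le hl i j
    _ = if j + 1 ∈ A then 1 / l else 0 := sum_ite_eq' A (j + 1) _
    _ ≤ 1 / l := by split_ifs; exacts [le_rfl, by positivity]

theorem binomialPMFReal_eq_poissonPMFReal'_of_mul_eq_zero {m : ℕ} {p : ℝ} (h : (m : ℝ) * p = 0)
    (k : ℕ) : binomialPMFReal m p k = poissonPMFReal' (m * p) k := by
  rw [h]
  obtain rfl | rfl : m = 0 ∨ p = 0 := by exact_mod_cast mul_eq_zero.1 h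
  all_goals cases k <;> simp [binomialPMFReal, poissonPMFReal']

theorem sum_binomialPMFReal_sub_poissonPMFReal'_le (m : ℕ) {p : ℝ} (hp0 : 0 ≤ p) (hp1 : p ≤ 1)
    (A : Finset ℕ) : ∑ k ∈ A, (binomialPMFReal m p k - poissonPMFReal' (m * p) k) ≤ p := by
  rcases eq_or_ne ((m : ℝ) * p) 0 with hmp | hmp
  · simp [binomialPMFReal_eq_poissonPMFReal'_of_mul_eq_zero hmp, hp0]
  obtain ⟨m, rfl⟩ := Nat.exists_eq_add_one_of_ne_zero (n := m) (by rintro rfl; simp at hmp)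
  set l := ((m + 1 : ℕ) : ℝ) * p with hl_def
  have hl : 0 < l := lt_of_le_of_ne (by positivity) (Ne.symm hmp)
  have hl' : l = (m + 1) * p := by rw [hl_def]; push_cast; ring
  set h := fun k => (if k ∈ A then 1 else 0) - ∑ i ∈ A, poissonPMFReal' l i
  set f := poissonSteinSolution l h
  have hmean : ∑ k ∈ A, (binomialPMFReal (m + 1) p k - poissonPMFReal' l k) =
      ∑ k ∈ range (m + 1 + 1), binomialPMFReal (m + 1) p k * h k := by
    simp only [h, mul_sub, mul_ite, mul_one, mul_zero, sum_sub_distrib, ← sum_mul,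
      sum_range_binomialPMFReal, one_mul]
    rw [sum_binomialPMFReal_eq_sum_range_ite]
  calc ∑ k ∈ A, (binomialPMFReal (m + 1) p k - poissonPMFReal' l k)
      = ∑ k ∈ range (m + 2), binomialPMFReal (m + 1) p k * ((m + 1) * p * f (k + 1) - k * f k) := by
        rw [hmean]
        refine sum_congr rfl fun k _ => ?_
        rw [← hl', poissonSteinSolution_stein hl.ne' h k]
    _ = (m + 1) * p ^ 2 * ∑ k ∈ range (m + 1), binomialPMFReal m p k * (f (k + 2) - f (k + 1)) :=
        sum_range_binomialPMFReal_mul_stein m p f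
    _ ≤ (m + 1) * p ^ 2 * ∑ k ∈ range (m + 1), binomialPMFReal m p k * (1 / l) := by
        gcongr with k
        · exact binomialPMFReal_nonneg hp0 hp1 m k
        · exact poissonSteinSolution_indicator_succ_sub_le hl A k
    _ = p := by
        rw [← sum_mul, sum_range_binomialPMFReal, hl']
        field_simp

theorem tsum_abs_binomialPMFReal_sub_poissonPMFReal'_le (m : ℕ) {p : ℝ} (hp0 : 0 ≤ p) (hp1 : p ≤ 1) :
    ∑' k, |binomialPMFReal m p k - poissonPMFReal' (m * p) k| ≤ 2 * p :=
  tsum_abs_sub_le_of_forall_sum_sub_le (hasSum_binomialPMFReal m p) (hasSum_poissonPMFReal' _)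
    (sum_binomialPMFReal_sub_poissonPMFReal'_le m hp0 hp1)

theorem totalVariation_binomial_poisson_le_general
    (n : ℕ) (κ : ℝ) (hκ0 : 0 ≤ κ) (hκn : κ ≤ (n : ℝ))
    (b ny : ℕ) (hb : b ≤ ny)
    (μy : ℝ) (hμ0 : 0 ≤ μy) :
    (1 / 2) * ∑' k : ℕ,
        |binomialPMFReal (ny - b) (κ / n) k - poissonPMFReal' (κ * μy) k| ≤
      κ * (((b : ℝ) + 1) / n + |(ny : ℝ) / n - μy|) := by
  have hp0 : 0 ≤ κ / n := by positivity
  have hp1 : κ / n ≤ 1 := div_le_one_of_le₀ hκn n.cast_nonneg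
  have hmean : |((ny - b : ℕ) : ℝ) * (κ / n) - κ * μy| ≤ κ * |(ny : ℝ) / n - μy| + κ * (b / n) := by
    rw [show ((ny - b : ℕ) : ℝ) * (κ / n) - κ * μy = κ * ((ny : ℝ) / n - μy) - κ * (b / n) by
      rw [Nat.cast_sub hb]; ring]
    refine (abs_sub _ _).trans_eq ?_
    rw [abs_mul, abs_mul, abs_of_nonneg hκ0, abs_of_nonneg (by positivity : (0 : ℝ) ≤ b / n)]
  have htri := tsum_abs_sub_le_tsum_abs_sub_add_tsum_abs_sub
    (hasSum_binomialPMFReal (ny - b) (κ / n)).summable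
    (hasSum_poissonPMFReal' (((ny - b : ℕ) : ℝ) * (κ / n))).summable
    (hasSum_poissonPMFReal' (κ * μy)).summable
  have hbin := tsum_abs_binomialPMFReal_sub_poissonPMFReal'_le (ny - b) hp0 hp1
  have hpoi := tsum_abs_poissonPMFReal'_sub_le (by positivity : (0 : ℝ) ≤ ((ny - b : ℕ) : ℝ) * (κ / n))
    (by positivity : 0 ≤ κ * μy)
  calc (1 / 2) * ∑' k, |binomialPMFReal (ny - b) (κ / n) k - poissonPMFReal' (κ * μy) k|
      ≤ κ / n + |((ny - b : ℕ) : ℝ) * (κ / n) - κ * μy| := by linarith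
    _ ≤ κ * (((b : ℝ) + 1) / n + |(ny : ℝ) / n - μy|) := by
        rw [add_div, mul_add, mul_add, mul_one_div]
        linarith

/-- For `n ≥ 1`, `0 ≤ κ ≤ n`, `b ≤ n_y ≤ n` and `μ_y ∈ [0,1]`, the total
variation distance between the binomial distribution with `n_y - b` trials and success
probability `κ/n` and the Poisson distribution with mean `κ·μ_y` is at most
`κ·((b+1)/n + |n_y/n − μ_y|)`. -/
theorem totalVariation_binomial_poisson_le
    (n : ℕ) (hn : 1 ≤ n) (κ : ℝ) (hκ0 : 0 ≤ κ) (hκn : κ ≤ (n : ℝ))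
    (b ny : ℕ) (hb : b ≤ ny) (hny : ny ≤ n)
    (μy : ℝ) (hμ0 : 0 ≤ μy) (hμ1 : μy ≤ 1) :
    (1 / 2) * ∑' k : ℕ,
        |binomialPMFReal (ny - b) (κ / n) k - poissonPMFReal' (κ * μy) k| ≤
      κ * (((b : ℝ) + 1) / n + |(ny : ℝ) / n - μy|) :=
  totalVariation_binomial_poisson_le_general n κ hκ0 hκn b ny hb μy hμ0
end

section
/- Let S be a finite set, μ a probability measure on S, and k ≤ n natural numbers with k ≥ 1. Let x_1,…,x_n ∈ S be given, and for z ∈ S write n_z = #{i ∈ {1,…,n} : x_i = z}. Then there exists a coupling of a random vector (o_1,…,o_k) of k independent uniform random elements of {1,…,n} with a random vector (y_1,…,y_k) of k independent S-valued random variables each with law μ, such that with probability at least 1 − k·(k/n + Σ_{z ∈ S} |n_z/n − μ(z)|), the indices o_1,…,o_k are pairwise distinct and x_{o_i} = y_i for every i = 1,…,k. -/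
open MeasureTheory ProbabilityTheory
open scoped ENNReal

/-!
Let `ν` be the uniform law on `Fin n`. Keeping the mass `min (ν (x⁻¹' {z})) (μ {z})` of each
fibre on the graph of `x`, and coupling the leftover masses of `ν` and `μ` (which are equal)
independently, gives a coupling `γ` of `ν` and `μ` whose coordinates disagree through `x` with
probability at most `1 - ∑ z, min (n_z / n) (μ {z}) ≤ ∑ z, |n_z / n - μ {z}|`. Sample `k`
independent copies of `γ`: each of the `k²` ordered pairs of indices collides with probability at
most `1 / n`, and each copy fails to match with probability at most the above, so a union bound
concludes.
-/

open Set

lemma ENNReal.min_one_div_mul_self {a b : ℝ≥0∞} (ha : a ≠ ∞) : min 1 (b / a) * a = min a b := by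
  rcases eq_or_ne a 0 with rfl | ha₀
  · simp
  · rw [← min_mul_mul_right, one_mul, ENNReal.div_mul_cancel ha₀ ha]

lemma sub_min_le_abs_sub {R : Type*} [AddCommGroup R] [LinearOrder R] [IsOrderedAddMonoid R]
    (a b : R) : b - min a b ≤ |a - b| := by
  rw [← max_sub_min_eq_abs']
  exact sub_le_sub_right (le_max_right a b) _

namespace MeasureTheory

variable {α β ι : Type*} [MeasurableSpace α] [MeasurableSpace β]

lemma Measure.sum_mono {m m' : ι → Measure α} (h : ∀ i, m i ≤ m' i) :
    Measure.sum m ≤ Measure.sum m' :=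
  Measure.le_iff.2 fun s hs => by
    simp only [Measure.sum_apply _ hs]
    exact ENNReal.tsum_le_tsum fun i => h i s

lemma Measure.measure_univ_inv_smul_smul (m : Measure α) [IsFiniteMeasure m] :
    (m univ)⁻¹ • m univ • m = m := by
  by_cases h : m univ = 0
  · simp [Measure.measure_univ_eq_zero.1 h]
  · rw [smul_smul, ENNReal.inv_mul_cancel h (measure_ne_top m univ), one_smul]

lemma Measure.map_pi_eval_comp [Fintype ι] {α : ι → Type*} [∀ i, MeasurableSpace (α i)]
    (μ : ∀ i, Measure (α i)) [∀ i, IsProbabilityMeasure (μ i)] (i : ι) {g : α i → β}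
    (hg : Measurable g) : (Measure.pi μ).map (fun ω => g (ω i)) = (μ i).map g := by
  rw [← (measurePreserving_eval μ i).map_eq, Measure.map_map hg (measurable_pi_apply i)]
  rfl

theorem exists_coupling_of_le_of_map_le [MeasurableEq β] {ν : Measure α} {μ : Measure β}
    [IsProbabilityMeasure ν] [IsProbabilityMeasure μ] {f : α → β} (hf : Measurable f)
    {δ : Measure α} (hδν : δ ≤ ν) (hδμ : δ.map f ≤ μ) :
    ∃ γ : Measure (α × β), γ.map Prod.fst = ν ∧ γ.map Prod.snd = μ ∧
      γ {p | f p.1 ≠ p.2} ≤ 1 - δ univ := by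
  have : IsFiniteMeasure δ := isFiniteMeasure_of_le ν hδν
  set ρ := ν - δ
  set σ := μ - δ.map f
  have hρ : ρ univ = 1 - δ univ := by rw [Measure.sub_apply .univ hδν, measure_univ]
  have hσ : σ univ = ρ univ := by
    rw [Measure.sub_apply .univ hδμ, measure_univ, Measure.map_apply hf .univ, preimage_univ, hρ]
  set γ' := (ρ univ)⁻¹ • ρ.prod σ
  have hγ'fst : γ'.map Prod.fst = ρ := by
    rw [Measure.map_smul, Measure.map_fst_prod, hσ, Measure.measure_univ_inv_smul_smul]
  have hγ'snd : γ'.map Prod.snd = σ := by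
    rw [Measure.map_smul, Measure.map_snd_prod, ← hσ, Measure.measure_univ_inv_smul_smul]
  have hg : Measurable fun a => (a, f a) := measurable_id.prodMk hf
  have hgraph : MeasurableSet {p : α × β | f p.1 ≠ p.2} :=
    (measurableSet_eq_fun (hf.comp measurable_fst) measurable_snd).compl
  refine ⟨δ.map (fun a => (a, f a)) + γ', ?_, ?_, ?_⟩
  · rw [Measure.map_add _ _ measurable_fst, Measure.map_map measurable_fst hg, hγ'fst,
      show Prod.fst ∘ (fun a => (a, f a)) = id from rfl, Measure.map_id, add_comm]
    exact Measure.sub_add_cancel_of_le hδν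
  · rw [Measure.map_add _ _ measurable_snd, Measure.map_map measurable_snd hg, hγ'snd,
      show Prod.snd ∘ (fun a => (a, f a)) = f from rfl, add_comm]
    exact Measure.sub_add_cancel_of_le hδμ
  · have hdiag : δ.map (fun a => (a, f a)) {p | f p.1 ≠ p.2} = 0 := by
      rw [Measure.map_apply hg hgraph]
      simp
    calc (δ.map (fun a => (a, f a)) + γ') {p | f p.1 ≠ p.2}
        ≤ γ' univ := by
          rw [Measure.add_apply, hdiag, zero_add]
          exact measure_mono (subset_univ _)
      _ = 1 - δ univ := by
        rw [← hρ, ← hγ'fst, Measure.map_apply measurable_fst .univ, preimage_univ]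

theorem toReal_one_sub_tsum_min_le [Fintype β] [MeasurableSingletonClass β] (p q : Measure β)
    [IsFiniteMeasure p] [IsProbabilityMeasure q] :
    (1 - ∑' z, min (p {z}) (q {z})).toReal ≤ ∑ z, |p.real {z} - q.real {z}| := by
  have hmin : ∑ z, min (p {z}) (q {z}) ≤ 1 :=
    calc ∑ z, min (p {z}) (q {z}) ≤ ∑ z, q {z} := Finset.sum_le_sum fun z _ => min_le_right _ _
      _ = 1 := by rw [sum_measure_singleton, Finset.coe_univ, measure_univ]
  rw [tsum_fintype, ENNReal.toReal_sub_of_le hmin ENNReal.one_ne_top, ENNReal.toReal_one,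
    ENNReal.toReal_sum fun z _ => ne_top_of_le_ne_top (measure_ne_top q {z}) (min_le_right _ _)]
  simp only [ENNReal.toReal_min (measure_ne_top p _) (measure_ne_top q _), ← measureReal_def]
  calc 1 - ∑ z, min (p.real {z}) (q.real {z})
      = ∑ z, (q.real {z} - min (p.real {z}) (q.real {z})) := by
        rw [Finset.sum_sub_distrib, sum_measureReal_singleton, Finset.coe_univ, probReal_univ]
    _ ≤ ∑ z, |p.real {z} - q.real {z}| := Finset.sum_le_sum fun z _ => sub_min_le_abs_sub _ _

variable [Countable β] [MeasurableSingletonClass β]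

theorem exists_le_map_le_measure_univ_eq (ν : Measure α) [IsFiniteMeasure ν] (μ : Measure β)
    {f : α → β} (hf : Measurable f) :
    ∃ δ ≤ ν, δ.map f ≤ μ ∧ δ univ = ∑' z, min (ν.map f {z}) (μ {z}) := by
  set c : β → ℝ≥0∞ := fun z => min 1 (μ {z} / ν.map f {z})
  have hc : ∀ z, c z * ν.map f {z} = min (ν.map f {z}) (μ {z}) := fun z =>
    ENNReal.min_one_div_mul_self (measure_ne_top _ _)
  refine ⟨Measure.sum fun z => c z • ν.restrict (f ⁻¹' {z}), ?_, ?_, ?_⟩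
  · calc Measure.sum (fun z => c z • ν.restrict (f ⁻¹' {z}))
        ≤ Measure.sum fun z => ν.restrict (f ⁻¹' {z}) :=
          Measure.sum_mono fun z => Measure.le_iff'.2 fun s => by
            rw [Measure.smul_apply, smul_eq_mul]
            exact mul_le_of_le_one_left zero_le (min_le_left _ _)
      _ = ν := by
          rw [← Measure.restrict_iUnion (pairwise_disjoint_fiber f)
            fun z => hf (measurableSet_singleton z), ← preimage_iUnion, iUnion_of_singleton,
            preimage_univ, Measure.restrict_univ]
  · calc (Measure.sum fun z => c z • ν.restrict (f ⁻¹' {z})).map f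
        = Measure.sum fun z => min (ν.map f {z}) (μ {z}) • Measure.dirac z := by
          rw [Measure.map_sum hf.aemeasurable]
          congr with z : 1
          rw [Measure.map_smul, ← Measure.restrict_map hf (measurableSet_singleton z),
            Measure.restrict_singleton, smul_smul, hc]
      _ ≤ Measure.sum fun z => μ {z} • Measure.dirac z :=
          Measure.sum_mono fun z => Measure.le_iff'.2 fun s => by
            simp only [Measure.smul_apply, smul_eq_mul]
            exact mul_le_mul_left (min_le_right _ _) _
      _ = μ := Measure.sum_smul_dirac μ
  · rw [Measure.sum_apply _ .univ]
    congr with z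
    rw [Measure.smul_apply, Measure.restrict_apply_univ,
      ← Measure.map_apply hf (measurableSet_singleton z), smul_eq_mul, hc]

theorem exists_coupling_measure_ne_le (ν : Measure α) (μ : Measure β) [IsProbabilityMeasure ν]
    [IsProbabilityMeasure μ] {f : α → β} (hf : Measurable f) :
    ∃ γ : Measure (α × β), γ.map Prod.fst = ν ∧ γ.map Prod.snd = μ ∧
      γ {p | f p.1 ≠ p.2} ≤ 1 - ∑' z, min (ν.map f {z}) (μ {z}) := by
  obtain ⟨δ, hδν, hδμ, hδ⟩ := exists_le_map_le_measure_univ_eq ν μ hf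
  exact hδ ▸ exists_coupling_of_le_of_map_le hf hδν hδμ

end MeasureTheory

namespace ProbabilityTheory

variable {Ω α β ι : Type*} [MeasurableSpace Ω] [MeasurableSpace α] [MeasurableSpace β]
  [MeasurableEq α]

lemma uniformOn_univ_singleton [Fintype Ω] [MeasurableSingletonClass Ω] (ω : Ω) :
    uniformOn (univ : Set Ω) {ω} = (Fintype.card Ω : ℝ≥0∞)⁻¹ := by
  rw [uniformOn_univ, Measure.count_singleton, one_div]

lemma measureReal_map_uniformOn_univ_singleton [Fintype Ω] [MeasurableSingletonClass Ω]
    [DecidableEq β] [MeasurableSingletonClass β] {f : Ω → β} (hf : Measurable f) (b : β) :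
    ((uniformOn (univ : Set Ω)).map f).real {b} =
      ((Finset.univ.filter fun ω => f ω = b).card : ℝ) / Fintype.card Ω := by
  have hfib : f ⁻¹' {b} = ↑(Finset.univ.filter fun ω => f ω = b) := by ext; simp
  rw [measureReal_def, Measure.map_apply hf (measurableSet_singleton b), uniformOn_univ, hfib,
    Measure.count_apply_finset, ENNReal.toReal_div, ENNReal.toReal_natCast,
    ENNReal.toReal_natCast]

lemma IndepFun.measure_eq_le {P : Measure Ω} [IsProbabilityMeasure P] {X Y : Ω → α}
    (hXY : IndepFun X Y P) (hX : Measurable X) (hY : Measurable Y) {c : ℝ≥0∞}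
    (hc : ∀ a, P (Y ⁻¹' {a}) ≤ c) :
    P {ω | X ω = Y ω} ≤ c :=
  calc P {ω | X ω = Y ω} = P.map (fun ω => (X ω, Y ω)) (diagonal α) := by
        rw [Measure.map_apply (hX.prodMk hY) measurableSet_diagonal]; rfl
    _ = ∫⁻ a, P.map Y {a} ∂(P.map X) := by
        rw [(indepFun_iff_map_prod_eq_prod_map_map hX.aemeasurable hY.aemeasurable).1 hXY,
          Measure.prod_apply measurableSet_diagonal]
        congr with a
        congr 1 with b
        exact eq_comm
    _ ≤ ∫⁻ _, c ∂(P.map X) := lintegral_mono fun a => by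
        rw [Measure.map_apply hY (measurableSet_singleton a)]
        exact hc a
    _ = c := by
        rw [lintegral_const, Measure.map_apply hX .univ, preimage_univ, measure_univ, mul_one]

theorem iIndepFun.measure_not_injective_le [Fintype ι] {P : Measure Ω} [IsProbabilityMeasure P]
    {X : ι → Ω → α} (hind : iIndepFun X P) (hX : ∀ i, Measurable (X i)) {c : ℝ≥0∞}
    (hc : ∀ i a, P (X i ⁻¹' {a}) ≤ c) :
    P {ω | ¬ Function.Injective fun i => X i ω} ≤ Fintype.card ι ^ 2 * c := by
  have hsub : {ω | ¬ Function.Injective fun i => X i ω} ⊆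
      ⋃ p : ι × ι, {ω | p.1 ≠ p.2 ∧ X p.1 ω = X p.2 ω} := fun ω hω => by
    obtain ⟨i, j, hij, hne⟩ := Function.not_injective_iff.1 hω
    exact mem_iUnion.2 ⟨(i, j), hne, hij⟩
  have hpair : ∀ p : ι × ι, P {ω | p.1 ≠ p.2 ∧ X p.1 ω = X p.2 ω} ≤ c := fun p => by
    by_cases hp : p.1 = p.2
    · simp [hp]
    · exact (measure_mono fun ω hω => hω.2).trans
        ((hind.indepFun hp).measure_eq_le (hX _) (hX _) (hc p.2))
  calc P {ω | ¬ Function.Injective fun i => X i ω}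
      ≤ ∑ p : ι × ι, P {ω | p.1 ≠ p.2 ∧ X p.1 ω = X p.2 ω} :=
        (measure_mono hsub).trans (measure_iUnion_fintype_le _ _)
    _ ≤ ∑ _p : ι × ι, c := Finset.sum_le_sum fun p _ => hpair p
    _ = Fintype.card ι ^ 2 * c := by simp [sq]

theorem measureReal_pi_not_injective_fst_le [Fintype ι] (γ : Measure (α × β))
    [IsProbabilityMeasure γ] {c : ℝ≥0∞} (hc_top : c ≠ ∞) (hc : ∀ a, γ.map Prod.fst {a} ≤ c) :
    (Measure.pi fun _ : ι => γ).real {ω | ¬ Function.Injective fun i => (ω i).1} ≤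
      Fintype.card ι ^ 2 * c.toReal := by
  have hindep : iIndepFun (fun i (ω : ι → α × β) => (ω i).1) (Measure.pi fun _ : ι => γ) :=
    iIndepFun_pi fun _ => measurable_fst.aemeasurable
  have h := hindep.measure_not_injective_le (fun i => by fun_prop) fun i a => by
    rw [← Measure.map_apply (by fun_prop) (measurableSet_singleton a),
      Measure.map_pi_eval_comp _ i measurable_fst]
    exact hc a
  rw [measureReal_def]
  simpa using ENNReal.toReal_mono (by finiteness) h

theorem le_measureReal_pi_injective_and_forall_eq [Fintype ι] [MeasurableEq β]
    (γ : Measure (α × β)) [IsProbabilityMeasure γ] {f : α → β} (hf : Measurable f) {c : ℝ≥0∞}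
    (hc_top : c ≠ ∞) (hc : ∀ a, γ.map Prod.fst {a} ≤ c) :
    1 - Fintype.card ι * (Fintype.card ι * c.toReal + γ.real {p | f p.1 ≠ p.2}) ≤
      (Measure.pi fun _ : ι => γ).real
        {ω | Function.Injective (fun i => (ω i).1) ∧ ∀ i, f (ω i).1 = (ω i).2} := by
  set P := Measure.pi fun _ : ι => γ
  set E := {ω : ι → α × β | Function.Injective (fun i => (ω i).1) ∧ ∀ i, f (ω i).1 = (ω i).2}
  set D := {p : α × β | f p.1 ≠ p.2}
  have hD : MeasurableSet D := (measurableSet_eq_fun (hf.comp measurable_fst) measurable_snd).compl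
  have hEc : Eᶜ ⊆ {ω | ¬ Function.Injective fun i => (ω i).1} ∪
      ⋃ i, Function.eval i ⁻¹' D := fun ω hω => by
    simp only [E, mem_compl_iff, mem_ofPred_eq, not_and_or, not_forall] at hω
    rcases hω with h | ⟨i, hi⟩
    · exact Or.inl h
    · exact Or.inr (mem_iUnion.2 ⟨i, hi⟩)
  have hbad : ∀ i, P.real (Function.eval i ⁻¹' D) = γ.real D := fun i =>
    congrArg ENNReal.toReal
      ((measurePreserving_eval (fun _ => γ) i).measure_preimage hD.nullMeasurableSet)
  have hcover : 1 ≤ P.real E + P.real Eᶜ := by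
    simpa [union_compl_self, probReal_univ] using measureReal_union_le (μ := P) E Eᶜ
  have hEc_le : P.real Eᶜ ≤ Fintype.card ι ^ 2 * c.toReal + Fintype.card ι * γ.real D :=
    calc P.real Eᶜ
        ≤ P.real ({ω | ¬ Function.Injective fun i => (ω i).1} ∪ ⋃ i, Function.eval i ⁻¹' D) :=
          measureReal_mono hEc
      _ ≤ P.real {ω | ¬ Function.Injective fun i => (ω i).1} +
            ∑ i, P.real (Function.eval i ⁻¹' D) :=
          (measureReal_union_le _ _).trans (add_le_add le_rfl (measureReal_iUnion_fintype_le _))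
      _ ≤ Fintype.card ι ^ 2 * c.toReal + Fintype.card ι * γ.real D := by
          simp only [hbad, Finset.sum_const, Finset.card_univ, nsmul_eq_mul]
          exact add_le_add (measureReal_pi_not_injective_fst_le γ hc_top hc) le_rfl
  linarith

end ProbabilityTheory

/-- Let `S` be a finite set, `μ` a probability measure on `S`, and
`1 ≤ k ≤ n`.  Given types `x 1, …, x n ∈ S`, write `n_z` for the number of `i` with
`x i = z`.  Then there is a coupling of a vector of `k` independent uniform random
elements `O 1, …, O k` of `{1,…,n}` with a vector of `k` i.i.d. `S`-valued random
variables `Y 1, …, Y k` of law `μ`, such that with probability at least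
`1 − k·(k/n + Σ_z |n_z/n − μ(z)|)` the indices `O 1, …, O k` are pairwise distinct and
`x (O i) = Y i` for every `i`. -/
theorem coupling_uniform_roots_with_iid_types
    {S : Type} [Fintype S] [DecidableEq S] [MeasurableSpace S] [MeasurableSingletonClass S]
    (μ : Measure S) [IsProbabilityMeasure μ]
    (k n : ℕ) (hk : 1 ≤ k) (hkn : k ≤ n)
    (x : Fin n → S) :
    ∃ (Ω : Type) (_ : MeasurableSpace Ω) (P : Measure Ω) (_ : IsProbabilityMeasure P)
      (O : Ω → Fin k → Fin n) (Y : Ω → Fin k → S),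
      -- `O 1, …, O k` are independent and each uniformly distributed on `Fin n`
      (∀ i : Fin k, Measurable fun ω => O ω i) ∧
      iIndepFun (fun i ω => O ω i) P ∧
      (∀ (i : Fin k) (v : Fin n), P.map (fun ω => O ω i) {v} = ((n : ℝ≥0∞))⁻¹) ∧
      -- `Y 1, …, Y k` are independent, each with law `μ`
      (∀ i : Fin k, Measurable fun ω => Y ω i) ∧
      iIndepFun (fun i ω => Y ω i) P ∧
      (∀ i : Fin k, P.map (fun ω => Y ω i) = μ) ∧
      -- the coupling succeeds with the claimed probability
      (1 - (k : ℝ) * ((k : ℝ) / n +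
          ∑ z : S, |((Finset.univ.filter fun i : Fin n => x i = z).card : ℝ) / n -
            (μ {z}).toReal|) ≤
        (P {ω | Function.Injective (O ω) ∧ ∀ i : Fin k, x (O ω i) = Y ω i}).toReal) := by
  have : NeZero n := ⟨by omega⟩
  obtain ⟨γ, hγO, hγY, hγD⟩ :=
    exists_coupling_measure_ne_le (uniformOn (univ : Set (Fin n))) μ (f := x) .of_discrete
  have : IsProbabilityMeasure (γ.map Prod.fst) := hγO ▸ inferInstance
  have : IsProbabilityMeasure γ := Measure.isProbabilityMeasure_of_map Prod.fst
  have hD : γ.real {p | x p.1 ≠ p.2} ≤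
      ∑ z, |((Finset.univ.filter fun i : Fin n => x i = z).card : ℝ) / n - (μ {z}).toReal| := by
    simpa only [measureReal_map_uniformOn_univ_singleton .of_discrete, Fintype.card_fin,
      measureReal_def] using
      (ENNReal.toReal_mono (by simp) hγD).trans (toReal_one_sub_tsum_min_le _ _)
  refine ⟨Fin k → Fin n × S, inferInstance, Measure.pi fun _ => γ, inferInstance,
    fun ω i => (ω i).1, fun ω i => (ω i).2, fun i => by fun_prop,
    iIndepFun_pi fun _ => measurable_fst.aemeasurable, fun i v => ?_, fun i => by fun_prop,
    iIndepFun_pi fun _ => measurable_snd.aemeasurable, fun i => ?_, ?_⟩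
  · rw [Measure.map_pi_eval_comp _ i measurable_fst, hγO, uniformOn_univ_singleton,
      Fintype.card_fin]
  · rw [Measure.map_pi_eval_comp _ i measurable_snd, hγY]
  · have h := le_measureReal_pi_injective_and_forall_eq (ι := Fin k) γ (f := x) .of_discrete
      (ENNReal.inv_ne_top.2 (NeZero.ne _)) fun v => by
        rw [hγO, uniformOn_univ_singleton, Fintype.card_fin]
    rw [Fintype.card_fin, ENNReal.toReal_inv, ENNReal.toReal_natCast] at h
    refine le_trans ?_ h
    rw [div_eq_mul_inv]
    gcongr
end

section
/- Let λ ≥ 2 be a real number and d ∈ ℕ. Consider a Galton–Watson process with Poisson(λ) offspring and let Z̃_d = Σ_{k=0}^d Z_k be its total population up to generation d. Then λ^{2d} ≤ E[(Z̃_d)^2] ≤ 2·(λ/(λ − 1))^3 · λ^{2d} ≤ 16·λ^{2d}. -/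
open MeasureTheory ProbabilityTheory
open scoped ENNReal

/-!
Given the first `k` generations, `Z (k + 1)` is a sum of `Z k` fresh independent Poisson(`λ`)
variables, hence Poisson(`λ Z k`). Thus `E[W Z_{k+1}] = λ E[W Z_k]` for every `W` determined by
the earlier generations, and `E[Z_{k+1}²] = λ² E[Z_k²] + λ E[Z_k]`. Solving these recursions gives
`E[Z_j Z_k] = λ^k (1 + λ + ⋯ + λ^j)` for `j ≤ k`. Expanding `Z̃_d²`, the bound
`1 + ⋯ + λ^j ≤ λ^(j+1)/(λ-1)` gives the upper estimate, and the single term `E[Z_d²] ≥ λ^(2d)`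
the lower one. Moments are computed as lower Lebesgue integrals, so no integrability is needed.
-/

open Finset
open scoped NNReal

namespace ProbabilityTheory

lemma poissonMeasure_zero : poissonMeasure 0 = Measure.dirac 0 :=
  Measure.ext_iff_singleton.2 fun n => by cases n <;> simp [poissonMeasure_singleton]

lemma natCast_succ_mul_poissonMeasure_singleton_succ (r : ℝ≥0) (n : ℕ) :
    ((n + 1 : ℕ) : ℝ≥0∞) * poissonMeasure r {n + 1} = r * poissonMeasure r {n} := by
  rw [poissonMeasure_singleton, poissonMeasure_singleton, ← ENNReal.ofReal_natCast,
    ← ENNReal.ofReal_coe_nnreal, ← ENNReal.ofReal_mul (by positivity),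
    ← ENNReal.ofReal_mul (by positivity), Nat.factorial_succ]
  congr 1
  push_cast
  field_simp
  ring

lemma tsum_poissonMeasure_singleton (r : ℝ≥0) : ∑' n, poissonMeasure r {n} = 1 := by
  simpa using (lintegral_countable' (μ := poissonMeasure r) fun _ => 1).symm

lemma lintegral_natCast_poissonMeasure (r : ℝ≥0) :
    ∫⁻ n, (n : ℝ≥0∞) ∂poissonMeasure r = r := by
  rw [lintegral_countable', tsum_eq_zero_add' ENNReal.summable]
  simp only [CharP.cast_eq_zero, zero_mul, zero_add,
    natCast_succ_mul_poissonMeasure_singleton_succ, ENNReal.tsum_mul_left,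
    tsum_poissonMeasure_singleton, mul_one]

lemma lintegral_natCast_sq_poissonMeasure (r : ℝ≥0) :
    ∫⁻ n, (n : ℝ≥0∞) ^ 2 ∂poissonMeasure r = r + (r : ℝ≥0∞) ^ 2 := by
  have shift (n : ℕ) : ((n + 1 : ℕ) : ℝ≥0∞) ^ 2 * poissonMeasure r {n + 1}
      = r * poissonMeasure r {n} + r * ((n : ℝ≥0∞) * poissonMeasure r {n}) := by
    rw [sq, mul_assoc, natCast_succ_mul_poissonMeasure_singleton_succ]
    push_cast
    ring
  rw [lintegral_countable', tsum_eq_zero_add' ENNReal.summable]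
  simp only [shift, ENNReal.tsum_add, ENNReal.tsum_mul_left, tsum_poissonMeasure_singleton,
    ← lintegral_countable', lintegral_natCast_poissonMeasure]
  simp [sq]

lemma iIndepFun.hasLaw_sum_poissonMeasure {Ω ι : Type*} {mΩ : MeasurableSpace Ω}
    {P : Measure Ω} [IsProbabilityMeasure P] {X : ι → Ω → ℕ} {r : ℝ≥0} (hX : iIndepFun X P)
    (hmeas : ∀ i, Measurable (X i)) (hlaw : ∀ i, HasLaw (X i) (poissonMeasure r) P)
    (s : Finset ι) : HasLaw (∑ i ∈ s, X i) (poissonMeasure (#s * r)) P := by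
  classical
  induction s using Finset.induction_on with
  | empty =>
    simp only [sum_empty, card_empty, CharP.cast_eq_zero, zero_mul, poissonMeasure_zero]
    refine ⟨aemeasurable_const, ?_⟩
    rw [show (0 : Ω → ℕ) = fun _ => 0 from rfl, Measure.map_const]
    simp
  | insert i s hi ih =>
    rw [sum_insert hi, card_insert_of_notMem hi, add_comm (X i), Nat.cast_succ, add_one_mul]
    exact (hX.indepFun_finsetSum_of_notMem hmeas hi).hasLaw_add_poissonMeasure ih (hlaw i)

end ProbabilityTheory

section LIntegral

variable {Ω ι β : Type*} {mΩ : MeasurableSpace Ω}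

lemma lintegral_sum_sq {μ : Measure Ω} {s : Finset ι} {f : ι → Ω → ℝ≥0∞}
    (hf : ∀ i ∈ s, Measurable (f i)) :
    ∫⁻ ω, (∑ i ∈ s, f i ω) ^ 2 ∂μ = ∑ i ∈ s, ∑ j ∈ s, ∫⁻ ω, f i ω * f j ω ∂μ := by
  have hprod (i) (hi : i ∈ s) (j) (hj : j ∈ s) : Measurable fun ω => f i ω * f j ω :=
    (hf i hi).mul (hf j hj)
  simp_rw [sq, sum_mul_sum]
  rw [lintegral_finsetSum _ fun i hi => Finset.measurable_sum _ (hprod i hi)]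
  exact sum_congr rfl fun i hi => lintegral_finsetSum _ (hprod i hi)

lemma mul_apply_eq_tsum_indicator (W : Ω → ℝ≥0∞) (N : Ω → ι) (F : ι → Ω → ℝ≥0∞) (ω : Ω) :
    W ω * F (N ω) ω = ∑' n, {ω' | N ω' = n}.indicator W ω * F n ω := by
  rw [tsum_eq_single (N ω) fun n hn => by simp [Set.indicator_of_notMem, Ne.symm hn]]
  simp

variable [Countable ι] [MeasurableSpace ι] [MeasurableSingletonClass ι]

lemma Measurable.apply_of_countable [MeasurableSpace β] {F : ι → Ω → β}
    (hF : ∀ n, Measurable (F n)) {N : Ω → ι} (hN : Measurable N) :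
    Measurable fun ω => F (N ω) ω :=
  (measurable_from_prod_countable_left (f := fun p : Ω × ι => F p.2 p.1) hF).comp
    (measurable_id.prodMk hN)

lemma lintegral_mul_apply_eq_tsum {μ : Measure Ω} {W : Ω → ℝ≥0∞} {N : Ω → ι}
    {F : ι → Ω → ℝ≥0∞} (hW : Measurable W) (hN : Measurable N) (hF : ∀ n, Measurable (F n)) :
    ∫⁻ ω, W ω * F (N ω) ω ∂μ = ∑' n, ∫⁻ ω, {ω' | N ω' = n}.indicator W ω * F n ω ∂μ := by
  simp_rw [mul_apply_eq_tsum_indicator W N F]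
  exact lintegral_tsum fun n =>
    ((hW.indicator (hN (measurableSet_singleton n))).mul (hF n)).aemeasurable

/-- A random index `N` independent of the family `F` may be frozen inside the expectation. -/
theorem ProbabilityTheory.lintegral_mul_apply_of_indep {μ : Measure Ω}
    {m₁ m₂ : MeasurableSpace Ω} (h₁ : m₁ ≤ mΩ) (h₂ : m₂ ≤ mΩ) (hind : Indep m₁ m₂ μ)
    {W : Ω → ℝ≥0∞} {N : Ω → ι} {F : ι → Ω → ℝ≥0∞} (hW : Measurable[m₁] W)
    (hN : Measurable[m₁] N) (hF : ∀ n, Measurable[m₂] (F n)) :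
    ∫⁻ ω, W ω * F (N ω) ω ∂μ = ∫⁻ ω, W ω * ∫⁻ ω', F (N ω) ω' ∂μ ∂μ := by
  rw [lintegral_mul_apply_eq_tsum (hW.mono h₁ le_rfl) (hN.mono h₁ le_rfl)
      fun n => (hF n).mono h₂ le_rfl,
    lintegral_mul_apply_eq_tsum (F := fun n _ => ∫⁻ ω', F n ω' ∂μ) (hW.mono h₁ le_rfl)
      (hN.mono h₁ le_rfl) fun n => measurable_const]
  refine tsum_congr fun n => ?_
  have hWn : Measurable[m₁] ({ω' | N ω' = n}.indicator W) :=
    hW.indicator (hN (measurableSet_singleton n))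
  rw [lintegral_mul_eq_lintegral_mul_lintegral_of_independent_measurableSpace h₁ h₂ hind hWn (hF n),
    lintegral_mul_const _ (hWn.mono h₁ le_rfl)]

end LIntegral

section GeneratedSigma

variable {Ω ι β : Type*} {mΩ : MeasurableSpace Ω} [MeasurableSpace β]

abbrev generatedSigma (f : ι → Ω → β) (S : Set ι) : MeasurableSpace Ω :=
  ⨆ i ∈ S, MeasurableSpace.comap (f i) inferInstance

variable {f : ι → Ω → β} {S T : Set ι}

lemma generatedSigma_le (hf : ∀ i, Measurable (f i)) (S : Set ι) : generatedSigma f S ≤ mΩ :=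
  iSup₂_le fun i _ => (hf i).comap_le

lemma measurable_generatedSigma {i : ι} (hi : i ∈ S) : Measurable[generatedSigma f S] (f i) :=
  measurable_iff_comap_le.2 <|
    le_iSup₂ (f := fun i (_ : i ∈ S) => MeasurableSpace.comap (f i) inferInstance) i hi

lemma ProbabilityTheory.iIndepFun.indep_generatedSigma {μ : Measure Ω} (h : iIndepFun f μ)
    (hf : ∀ i, Measurable (f i)) (hST : Disjoint S T) :
    Indep (generatedSigma f S) (generatedSigma f T) μ :=
  indep_iSup_of_disjoint (fun i => (hf i).comap_le) h.iIndep hST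

end GeneratedSigma

/-- `E[Z_j Z_k]` for Poisson(`x`) offspring: `E[Z_j²] = x^j (1 + ⋯ + x^j)` solves
`E[Z_{j+1}²] = x² E[Z_j²] + x^(j+1)`, and each later generation contributes a factor `x`. -/
def gwMixedMoment {R : Type*} [Semiring R] (x : R) (j k : ℕ) : R :=
  x ^ max j k * ∑ i ∈ range (min j k + 1), x ^ i

section MixedMoment

variable {R S : Type*} [Semiring R] [Semiring S]

lemma gwMixedMoment_comm (x : R) (j k : ℕ) : gwMixedMoment x j k = gwMixedMoment x k j := by
  rw [gwMixedMoment, gwMixedMoment, max_comm, min_comm]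

lemma gwMixedMoment_of_le (x : R) {j k : ℕ} (hjk : j ≤ k) :
    gwMixedMoment x j k = x ^ k * ∑ i ∈ range (j + 1), x ^ i := by
  rw [gwMixedMoment, max_eq_right hjk, min_eq_left hjk]

lemma map_gwMixedMoment {F : Type*} [FunLike F R S] [RingHomClass F R S] (f : F) (x : R)
    (j k : ℕ) : f (gwMixedMoment x j k) = gwMixedMoment (f x) j k := by
  simp [gwMixedMoment, map_sum]

variable {x : ℝ}

lemma geom_sum_le_pow_div (hx : 1 < x) (n : ℕ) : ∑ i ∈ range n, x ^ i ≤ x ^ n / (x - 1) := by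
  rw [geom_sum_eq hx.ne' n]
  exact div_le_div_of_nonneg_right (sub_le_self _ zero_le_one) (sub_pos.2 hx).le

lemma gwMixedMoment_le (hx : 1 < x) (j k : ℕ) :
    gwMixedMoment x j k ≤ x ^ (j + k + 1) / (x - 1) := by
  calc gwMixedMoment x j k ≤ x ^ max j k * (x ^ (min j k + 1) / (x - 1)) :=
        mul_le_mul_of_nonneg_left (geom_sum_le_pow_div hx _) (by positivity)
    _ = x ^ (j + k + 1) / (x - 1) := by
        rw [mul_div_assoc', ← pow_add]
        congr 2
        omega

lemma sum_gwMixedMoment_le (hx : 1 < x) (d : ℕ) :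
    ∑ j ∈ range (d + 1), ∑ k ∈ range (d + 1), gwMixedMoment x j k
      ≤ (x / (x - 1)) ^ 3 * x ^ (2 * d) := by
  calc ∑ j ∈ range (d + 1), ∑ k ∈ range (d + 1), gwMixedMoment x j k
      ≤ ∑ j ∈ range (d + 1), ∑ k ∈ range (d + 1), x ^ (j + k + 1) / (x - 1) :=
        sum_le_sum fun j _ => sum_le_sum fun k _ => gwMixedMoment_le hx j k
    _ = x / (x - 1) * (∑ j ∈ range (d + 1), x ^ j) ^ 2 := by
        rw [sq, sum_mul_sum, mul_sum]
        refine sum_congr rfl fun j _ => ?_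
        rw [mul_sum]
        refine sum_congr rfl fun k _ => ?_
        ring
    _ ≤ x / (x - 1) * (x ^ (d + 1) / (x - 1)) ^ 2 := by
        have : 0 < x - 1 := sub_pos.2 hx
        gcongr
        exact geom_sum_le_pow_div hx _
    _ = (x / (x - 1)) ^ 3 * x ^ (2 * d) := by ring

lemma pow_le_sum_gwMixedMoment (hx : 0 ≤ x) (d : ℕ) :
    x ^ (2 * d) ≤ ∑ j ∈ range (d + 1), ∑ k ∈ range (d + 1), gwMixedMoment x j k := by
  have nonneg (j k : ℕ) : 0 ≤ gwMixedMoment x j k := by unfold gwMixedMoment; positivity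
  have hd := self_mem_range_succ d
  calc x ^ (2 * d) ≤ x ^ d * (∑ i ∈ range d, x ^ i + x ^ d) := by
        rw [two_mul, pow_add]
        gcongr
        exact le_add_of_nonneg_left (sum_nonneg fun i _ => by positivity)
    _ = gwMixedMoment x d d := by simp [gwMixedMoment, sum_range_succ]
    _ ≤ ∑ k ∈ range (d + 1), gwMixedMoment x d k := single_le_sum (fun k _ => nonneg d k) hd
    _ ≤ ∑ j ∈ range (d + 1), ∑ k ∈ range (d + 1), gwMixedMoment x j k :=
        single_le_sum (f := fun j => ∑ k ∈ range (d + 1), gwMixedMoment x j k)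
          (fun j _ => sum_nonneg fun k _ => nonneg j k) hd

end MixedMoment

structure IsPoissonGaltonWatson {Ω : Type*} [MeasurableSpace Ω] (P : Measure Ω) (r : ℝ≥0)
    (X : ℕ → ℕ → Ω → ℕ) (Z : ℕ → Ω → ℕ) : Prop where
  measurable_offspring : ∀ k i, Measurable (X k i)
  iIndepFun_offspring : iIndepFun (Function.uncurry X) P
  hasLaw_offspring : ∀ k i, HasLaw (X k i) (poissonMeasure r) P
  generation_zero : ∀ ω, Z 0 ω = 1
  generation_succ : ∀ k ω, Z (k + 1) ω = ∑ i ∈ range (Z k ω), X k i ω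

namespace IsPoissonGaltonWatson

variable {Ω : Type*} [MeasurableSpace Ω] {P : Measure Ω} {r : ℝ≥0} {X : ℕ → ℕ → Ω → ℕ}
  {Z : ℕ → Ω → ℕ}

lemma measurable_generation_of_le (h : IsPoissonGaltonWatson P r X Z) {j k : ℕ} (hjk : j ≤ k) :
    Measurable[generatedSigma (Function.uncurry X) {p | p.1 < k}] (Z j) := by
  induction j with
  | zero =>
    rw [funext h.generation_zero]
    exact measurable_const
  | succ j ih =>
    rw [funext (h.generation_succ j)]
    exact Measurable.apply_of_countable (F := fun n ω => ∑ i ∈ range n, X j i ω)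
      (fun n => Finset.measurable_sum _ fun i _ =>
        measurable_generatedSigma (f := Function.uncurry X) (i := (j, i)) (show j < k by omega))
      (ih (by omega))

lemma measurable_generation (h : IsPoissonGaltonWatson P r X Z) (k : ℕ) : Measurable (Z k) := by
  have hle := generatedSigma_le (fun p => h.measurable_offspring p.1 p.2) {p : ℕ × ℕ | p.1 < k}
  exact (h.measurable_generation_of_le le_rfl).mono hle le_rfl

lemma hasLaw_sum_offspring [IsProbabilityMeasure P] (h : IsPoissonGaltonWatson P r X Z)
    (k n : ℕ) : HasLaw (fun ω => ∑ i ∈ range n, X k i ω) (poissonMeasure (n * r)) P := by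
  have hk : iIndepFun (X k) P :=
    h.iIndepFun_offspring.precomp (g := fun i => (k, i)) fun _ _ => congrArg Prod.snd
  convert hk.hasLaw_sum_poissonMeasure (h.measurable_offspring k) (h.hasLaw_offspring k)
    (range n) using 1
  · ext ω
    simp
  · simp

lemma lintegral_mul_comp_generation_succ [IsProbabilityMeasure P]
    (h : IsPoissonGaltonWatson P r X Z) (k : ℕ) {W : Ω → ℝ≥0∞}
    (hW : Measurable[generatedSigma (Function.uncurry X) {p | p.1 < k}] W) (g : ℕ → ℝ≥0∞) :
    ∫⁻ ω, W ω * g (Z (k + 1) ω) ∂P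
      = ∫⁻ ω, W ω * ∫⁻ n, g n ∂poissonMeasure (Z k ω * r) ∂P := by
  have hX : ∀ p : ℕ × ℕ, Measurable (Function.uncurry X p) :=
    fun p => h.measurable_offspring p.1 p.2
  have hind : Indep (generatedSigma (Function.uncurry X) {p | p.1 < k})
      (generatedSigma (Function.uncurry X) {p | p.1 = k}) P :=
    h.iIndepFun_offspring.indep_generatedSigma hX
      (Set.disjoint_left.2 fun p (hlt : p.1 < k) (heq : p.1 = k) => by omega)
  simp_rw [h.generation_succ k]
  rw [lintegral_mul_apply_of_indep (generatedSigma_le hX _) (generatedSigma_le hX _) hind hW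
    (h.measurable_generation_of_le le_rfl) (F := fun n ω => g (∑ i ∈ range n, X k i ω))
    fun n => Measurable.of_discrete.comp <| Finset.measurable_sum _ fun i _ =>
      measurable_generatedSigma (f := Function.uncurry X) (i := (k, i)) rfl]
  refine lintegral_congr fun ω => ?_
  rw [(h.hasLaw_sum_offspring k (Z k ω)).lintegral_comp Measurable.of_discrete.aemeasurable]

lemma lintegral_mul_generation_succ [IsProbabilityMeasure P]
    (h : IsPoissonGaltonWatson P r X Z) (k : ℕ) {W : Ω → ℝ≥0∞}
    (hW : Measurable[generatedSigma (Function.uncurry X) {p | p.1 < k}] W) :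
    ∫⁻ ω, W ω * Z (k + 1) ω ∂P = r * ∫⁻ ω, W ω * Z k ω ∂P := by
  rw [h.lintegral_mul_comp_generation_succ k hW Nat.cast, ← lintegral_const_mul' _ _ (by simp)]
  simp only [lintegral_natCast_poissonMeasure, ENNReal.coe_mul, ENNReal.coe_natCast]
  exact lintegral_congr fun ω => by ring

lemma lintegral_generation_succ_sq [IsProbabilityMeasure P] (h : IsPoissonGaltonWatson P r X Z)
    (k : ℕ) : ∫⁻ ω, (Z (k + 1) ω : ℝ≥0∞) ^ 2 ∂P
      = r ^ 2 * ∫⁻ ω, (Z k ω : ℝ≥0∞) ^ 2 ∂P + r * ∫⁻ ω, (Z k ω : ℝ≥0∞) ∂P := by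
  have hZ : Measurable fun ω => (Z k ω : ℝ≥0∞) :=
    Measurable.of_discrete.comp (h.measurable_generation k)
  have step := h.lintegral_mul_comp_generation_succ k (W := 1) measurable_const
    fun n => (n : ℝ≥0∞) ^ 2
  simp only [Pi.one_apply, one_mul, lintegral_natCast_sq_poissonMeasure, ENNReal.coe_mul,
    ENNReal.coe_natCast] at step
  rw [step, ← lintegral_const_mul' _ _ (by simp), ← lintegral_const_mul' _ _ (by simp),
    ← lintegral_add_left ((hZ.pow_const 2).const_mul _)]
  exact lintegral_congr fun ω => by ring

lemma lintegral_generation [IsProbabilityMeasure P] (h : IsPoissonGaltonWatson P r X Z) (k : ℕ) :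
    ∫⁻ ω, (Z k ω : ℝ≥0∞) ∂P = r ^ k := by
  induction k with
  | zero => simp [h.generation_zero]
  | succ k ih =>
    have step := h.lintegral_mul_generation_succ k (W := 1) measurable_const
    simp only [Pi.one_apply, one_mul] at step
    rw [step, ih, pow_succ, mul_comm]

lemma lintegral_generation_sq [IsProbabilityMeasure P] (h : IsPoissonGaltonWatson P r X Z)
    (k : ℕ) : ∫⁻ ω, (Z k ω : ℝ≥0∞) ^ 2 ∂P = r ^ k * ∑ i ∈ range (k + 1), (r : ℝ≥0∞) ^ i := by
  induction k with
  | zero => simp [h.generation_zero]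
  | succ k ih =>
    rw [h.lintegral_generation_succ_sq, ih, h.lintegral_generation, sum_range_succ' _ (k + 1)]
    simp only [pow_succ, ← sum_mul]
    ring

lemma lintegral_generation_mul [IsProbabilityMeasure P] (h : IsPoissonGaltonWatson P r X Z)
    (j k : ℕ) : ∫⁻ ω, (Z j ω : ℝ≥0∞) * Z k ω ∂P = gwMixedMoment (r : ℝ≥0∞) j k := by
  wlog hjk : j ≤ k generalizing j k
  · simp_rw [mul_comm (Z j _ : ℝ≥0∞), gwMixedMoment_comm _ j]
    exact this k j (by omega)
  obtain ⟨t, rfl⟩ := Nat.exists_eq_add_of_le hjk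
  induction t with
  | zero => simp [gwMixedMoment, ← sq, h.lintegral_generation_sq]
  | succ t ih =>
    rw [← add_assoc, h.lintegral_mul_generation_succ (j + t) (W := fun ω => (Z j ω : ℝ≥0∞))
      (Measurable.of_discrete.comp (h.measurable_generation_of_le (by omega))), ih (by omega)]
    rw [gwMixedMoment_of_le _ (by omega : j ≤ j + t),
      gwMixedMoment_of_le _ (by omega : j ≤ j + t + 1)]
    ring

lemma integral_sum_generation_sq [IsProbabilityMeasure P] (h : IsPoissonGaltonWatson P r X Z)
    (s : Finset ℕ) : ∫ ω, (((∑ k ∈ s, Z k ω : ℕ) : ℝ)) ^ 2 ∂P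
      = ∑ j ∈ s, ∑ k ∈ s, gwMixedMoment (r : ℝ) j k := by
  have hZ (k) : Measurable fun ω => (Z k ω : ℝ≥0∞) :=
    Measurable.of_discrete.comp (h.measurable_generation k)
  rw [integral_eq_lintegral_of_nonneg_ae (ae_of_all _ fun ω => sq_nonneg _)
    (Measurable.of_discrete (f := fun n : ℕ => (n : ℝ) ^ 2) |>.comp
      (Finset.measurable_sum s fun k _ => h.measurable_generation k)).aestronglyMeasurable]
  simp_rw [ENNReal.ofReal_pow (Nat.cast_nonneg _), ENNReal.ofReal_natCast, Nat.cast_sum]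
  rw [lintegral_sum_sq fun k _ => hZ k]
  have hcast (j k : ℕ) : gwMixedMoment (r : ℝ≥0∞) j k = (gwMixedMoment r j k : ℝ≥0) :=
    (map_gwMixedMoment ENNReal.ofNNRealHom r j k).symm
  have hcast' (j k : ℕ) : ((gwMixedMoment r j k : ℝ≥0) : ℝ) = gwMixedMoment (r : ℝ) j k :=
    map_gwMixedMoment NNReal.toRealHom r j k
  simp_rw [h.lintegral_generation_mul, hcast, ← ENNReal.ofNNReal_finsetSum, ENNReal.coe_toReal,
    NNReal.coe_sum, hcast']

end IsPoissonGaltonWatson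

/-- Let `λ ≥ 2` and `d ∈ ℕ`.  For a Galton–Watson process with
Poisson(`λ`) offspring (generation sizes `Z 0 = 1`,
`Z (k+1) = Σ_{i < Z k} X k i` for an i.i.d. family `X k i ~ Poisson(λ)`), the total
population `Z̃_d = Σ_{k ≤ d} Z k` satisfies
`λ^(2d) ≤ E[(Z̃_d)²] ≤ 2·(λ/(λ−1))³·λ^(2d) ≤ 16·λ^(2d)`. -/
theorem galtonWatson_poisson_total_population_second_moment
    {Ω : Type*} [MeasurableSpace Ω] (P : Measure Ω) [IsProbabilityMeasure P]
    (l : ℝ) (hl : 2 ≤ l) (d : ℕ)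
    (X : ℕ → ℕ → Ω → ℕ)
    (hXmeas : ∀ k i, Measurable (X k i))
    -- the family `(X k i)` is i.i.d. with Poisson(`λ`) marginals
    (hXindep : iIndepFun
      (fun p : ℕ × ℕ => X p.1 p.2) P)
    (hXlaw : ∀ k i, ∀ s : ℕ, P.map (X k i) {s} =
      ENNReal.ofReal (Real.exp (-l) * l ^ s / (s.factorial : ℝ)))
    -- generation sizes of the Galton–Watson process
    (Z : ℕ → Ω → ℕ)
    (hZ0 : ∀ ω, Z 0 ω = 1)
    (hZrec : ∀ k ω, Z (k + 1) ω = ∑ i ∈ Finset.range (Z k ω), X k i ω) :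
    l ^ (2 * d) ≤ (∫ ω, (((∑ k ∈ Finset.range (d + 1), Z k ω : ℕ) : ℝ)) ^ 2 ∂P) ∧
      (∫ ω, (((∑ k ∈ Finset.range (d + 1), Z k ω : ℕ) : ℝ)) ^ 2 ∂P) ≤
        2 * (l / (l - 1)) ^ 3 * l ^ (2 * d) ∧
      2 * (l / (l - 1)) ^ 3 * l ^ (2 * d) ≤ 16 * l ^ (2 * d) := by
  have hl0 : 0 ≤ l := by linarith
  have hr : (l.toNNReal : ℝ) = l := Real.coe_toNNReal l hl0
  have hGW : IsPoissonGaltonWatson P l.toNNReal X Z :=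
    { measurable_offspring := hXmeas
      iIndepFun_offspring := hXindep
      hasLaw_offspring := fun k i => ⟨(hXmeas k i).aemeasurable,
        Measure.ext_iff_singleton.2 fun s => by rw [hXlaw, poissonMeasure_singleton, hr]⟩
      generation_zero := hZ0
      generation_succ := hZrec }
  have hratio₀ : 0 ≤ l / (l - 1) := div_nonneg hl0 (by linarith)
  have hratio : l / (l - 1) ≤ 2 := by rw [div_le_iff₀ (by linarith)]; linarith
  rw [hGW.integral_sum_generation_sq, hr]
  refine ⟨pow_le_sum_gwMixedMoment hl0 d, (sum_gwMixedMoment_le (by linarith) d).trans ?_, ?_⟩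
  · rw [mul_assoc]
    exact le_mul_of_one_le_left (by positivity) one_le_two
  · calc 2 * (l / (l - 1)) ^ 3 * l ^ (2 * d) ≤ 2 * 2 ^ 3 * l ^ (2 * d) := by gcongr
      _ = 16 * l ^ (2 * d) := by norm_num
end
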